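/- arXiv:math/0701055 — 2 statements merged into one kernel-verified Lean document; each statement's English description precedes it below -/
import Mathlib

section
/- For every n ≥ 0 and all z, w ∈ ℂ with z ≠ w, the Poisson bracket {φ_n(z), φ_n^*(w)} = (i/4)·[φ_n(z)·(φ_n^*(w) − ψ_n^*(w)) + (φ_n(z) − ψ_n(z))·φ_n^*(w)] + (i·w/(z−w))·(φ_n(z)·φ_n^*(w) − φ_n(w)·φ_n^*(z)). -/
open Complex

/-- Derivative of `f` in the direction of the real part of the `k`-th variable α_k. -/
noncomputable def duDeriv (k : ℕ) (f : (ℕ → ℂ) → ℂ) (a : ℕ → ℂ) : ℂ :=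
  deriv (fun t : ℝ => f (Function.update a k (a k + (t : ℂ)))) 0

/-- Derivative of `f` in the direction of the imaginary part of the `k`-th variable α_k. -/
noncomputable def dvDeriv (k : ℕ) (f : (ℕ → ℂ) → ℂ) (a : ℕ → ℂ) : ℂ :=
  deriv (fun t : ℝ => f (Function.update a k (a k + (t : ℂ) * Complex.I))) 0

/-- Wirtinger derivative ∂f/∂α_k = (1/2)(∂/∂u_k − i·∂/∂v_k). -/
noncomputable def dAlpha (k : ℕ) (f : (ℕ → ℂ) → ℂ) (a : ℕ → ℂ) : ℂ :=
  (1 / 2) * (duDeriv k f a - Complex.I * dvDeriv k f a)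

/-- Wirtinger derivative ∂f/∂conj(α_k) = (1/2)(∂/∂u_k + i·∂/∂v_k). -/
noncomputable def dAlphaBar (k : ℕ) (f : (ℕ → ℂ) → ℂ) (a : ℕ → ℂ) : ℂ :=
  (1 / 2) * (duDeriv k f a + Complex.I * dvDeriv k f a)

/-- The Poisson bracket
{f,g} = i·Σ_k (1 − |α_k|²)·[(∂f/∂conj(α_k))·(∂g/∂α_k) − (∂f/∂α_k)·(∂g/∂conj(α_k))]. -/
noncomputable def pb (f g : (ℕ → ℂ) → ℂ) (a : ℕ → ℂ) : ℂ :=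
  Complex.I * ∑' k : ℕ, (1 - (Complex.normSq (a k) : ℂ)) *
    (dAlphaBar k f a * dAlpha k g a - dAlpha k f a * dAlphaBar k g a)

/-- The pair (Φ_n(z), Φ_n^*(z)) as a function of the Verblunsky coefficients:
Φ_0 = Φ_0^* = 1, Φ_{n+1}(z) = z·Φ_n(z) − conj(α_n)·Φ_n^*(z),
Φ_{n+1}^*(z) = Φ_n^*(z) − α_n·z·Φ_n(z). -/
noncomputable def PhiP : ℕ → ℂ → (ℕ → ℂ) → ℂ × ℂ
  | 0, _, _ => (1, 1)
  | n + 1, z, a =>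
      (z * (PhiP n z a).1 - (starRingEnd ℂ) (a n) * (PhiP n z a).2,
       (PhiP n z a).2 - a n * z * (PhiP n z a).1)

/-- The monic orthogonal polynomial Φ_n(z). -/
noncomputable def Phi (n : ℕ) (z : ℂ) (a : ℕ → ℂ) : ℂ := (PhiP n z a).1

/-- The reversed polynomial Φ_n^*(z). -/
noncomputable def PhiStar (n : ℕ) (z : ℂ) (a : ℕ → ℂ) : ℂ := (PhiP n z a).2

/-- The second kind polynomial Ψ_n(z): same recurrence with every α_k replaced by −α_k. -/
noncomputable def Psi (n : ℕ) (z : ℂ) (a : ℕ → ℂ) : ℂ := Phi n z (fun k => - a k)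

/-- The reversed second kind polynomial Ψ_n^*(z). -/
noncomputable def PsiStar (n : ℕ) (z : ℂ) (a : ℕ → ℂ) : ℂ := PhiStar n z (fun k => - a k)

/-- R_n = Π_{j=0}^{n−1} ρ_j⁻¹ with ρ_j = √(1 − |α_j|²), regarded as a ℂ-valued function. -/
noncomputable def Rn (n : ℕ) (a : ℕ → ℂ) : ℂ :=
  ∏ j ∈ Finset.range n, ((Real.sqrt (1 - Complex.normSq (a j)) : ℂ))⁻¹

/-- The orthonormal polynomial φ_n(z) = R_n·Φ_n(z). -/
noncomputable def phiN (n : ℕ) (z : ℂ) (a : ℕ → ℂ) : ℂ := Rn n a * Phi n z a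

/-- The reversed orthonormal polynomial φ_n^*(z) = R_n·Φ_n^*(z). -/
noncomputable def phiNStar (n : ℕ) (z : ℂ) (a : ℕ → ℂ) : ℂ := Rn n a * PhiStar n z a

/-- The normalized second kind polynomial ψ_n(z) = R_n·Ψ_n(z). -/
noncomputable def psiN (n : ℕ) (z : ℂ) (a : ℕ → ℂ) : ℂ := Rn n a * Psi n z a

/-- The reversed normalized second kind polynomial ψ_n^*(z) = R_n·Ψ_n^*(z). -/
noncomputable def psiNStar (n : ℕ) (z : ℂ) (a : ℕ → ℂ) : ℂ := Rn n a * PsiStar n z a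


namespace PAux

noncomputable def P2 (a b : ℕ → ℂ) : ℕ → ℂ → ℂ × ℂ
  | 0, _ => (1, 1)
  | n + 1, z => (z * (P2 a b n z).1 - b n * (P2 a b n z).2,
                 (P2 a b n z).2 - a n * z * (P2 a b n z).1)

noncomputable def dA (a b : ℕ → ℂ) (k : ℕ) : ℕ → ℂ → ℂ × ℂ
  | 0, _ => (0, 0)
  | n + 1, z =>
      (z * (dA a b k n z).1 - b n * (dA a b k n z).2,
       (dA a b k n z).2 - a n * z * (dA a b k n z).1
         - (if k = n then z * (P2 a b n z).1 else 0))

noncomputable def dB (a b : ℕ → ℂ) (k : ℕ) : ℕ → ℂ → ℂ × ℂ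
  | 0, _ => (0, 0)
  | n + 1, z =>
      (z * (dB a b k n z).1 - b n * (dB a b k n z).2
         - (if k = n then (P2 a b n z).2 else 0),
       (dB a b k n z).2 - a n * z * (dB a b k n z).1)

lemma P2_congr (a b a' b' : ℕ → ℂ) (n : ℕ) (z : ℂ)
    (ha : ∀ j < n, a j = a' j) (hb : ∀ j < n, b j = b' j) :
    P2 a b n z = P2 a' b' n z := by
  induction n with
  | zero => rfl
  | succ n ih =>
    have h := ih (fun j hj => ha j (hj.trans (Nat.lt_succ_self n)))
      (fun j hj => hb j (hj.trans (Nat.lt_succ_self n)))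
    simp only [P2, h, ha n (Nat.lt_succ_self n), hb n (Nat.lt_succ_self n)]

lemma dA_zero (a b : ℕ → ℂ) (k n : ℕ) (z : ℂ) (h : n ≤ k) : dA a b k n z = 0 := by
  induction n with
  | zero => rfl
  | succ n ih =>
    have h1 : n ≤ k := (Nat.le_succ n).trans h
    have h2 : k ≠ n := by omega
    simp [dA, ih h1, h2, Prod.ext_iff]

lemma dB_zero (a b : ℕ → ℂ) (k n : ℕ) (z : ℂ) (h : n ≤ k) : dB a b k n z = 0 := by
  induction n with
  | zero => rfl
  | succ n ih =>
    have h1 : n ≤ k := (Nat.le_succ n).trans h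
    have h2 : k ≠ n := by omega
    simp [dB, ih h1, h2, Prod.ext_iff]

lemma P2_update (a b : ℕ → ℂ) (k n : ℕ) (z x y : ℂ) :
    P2 (Function.update a k x) (Function.update b k y) n z
      = ((P2 a b n z).1 + (x - a k) * (dA a b k n z).1 + (y - b k) * (dB a b k n z).1,
         (P2 a b n z).2 + (x - a k) * (dA a b k n z).2 + (y - b k) * (dB a b k n z).2) := by
  induction n with
  | zero => simp [P2, dA, dB]
  | succ n ih =>
    by_cases hk : k = n
    · subst hk
      have hc : P2 (Function.update a k x) (Function.update b k y) k z = P2 a b k z :=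
        P2_congr _ _ _ _ _ _ (fun j hj => Function.update_of_ne (Nat.ne_of_lt hj) _ _)
          (fun j hj => Function.update_of_ne (Nat.ne_of_lt hj) _ _)
      simp only [P2, dA, dB, hc, Function.update_self, if_pos rfl,
        dA_zero a b k k z le_rfl, dB_zero a b k k z le_rfl, Prod.fst_zero, Prod.snd_zero,
        if_true, Prod.mk.injEq]
      constructor <;> ring
    · simp only [P2, dA, dB, ih, Function.update_of_ne (Ne.symm hk) _ _, if_neg hk,
        Prod.mk.injEq]
      constructor <;> ring

/-- summand of the algebraic Poisson bracket, monic level -/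
noncomputable def Tm (a b : ℕ → ℂ) (z w : ℂ) (n k : ℕ) (s1 s2 : ℂ × ℂ → ℂ) : ℂ :=
  (1 - a k * b k) * (s1 (dB a b k n z) * s2 (dA a b k n w)
      - s1 (dA a b k n z) * s2 (dB a b k n w))
  + a k / 2 * (s1 (P2 a b n z) * s2 (dA a b k n w) - s1 (dA a b k n z) * s2 (P2 a b n w))
  + b k / 2 * (s1 (dB a b k n z) * s2 (P2 a b n w) - s1 (P2 a b n z) * s2 (dB a b k n w))

noncomputable def PBsum (a b : ℕ → ℂ) (z w : ℂ) (n : ℕ) (s1 s2 : ℂ × ℂ → ℂ) : ℂ :=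
  ∑ k ∈ Finset.range n, Tm a b z w n k s1 s2

lemma PBsum_antisymm (a b : ℕ → ℂ) (z w : ℂ) (n : ℕ) (s1 s2 : ℂ × ℂ → ℂ) :
    PBsum a b z w n s1 s2 = - PBsum a b w z n s2 s1 := by
  unfold PBsum
  rw [← Finset.sum_neg_distrib]
  exact Finset.sum_congr rfl fun k _ => by unfold Tm; ring



lemma PBsum_succ_fs (a b : ℕ → ℂ) (z w : ℂ) (n : ℕ) :
    PBsum a b z w (n+1) Prod.fst Prod.snd
      = z * PBsum a b z w n Prod.fst Prod.snd
        - z * a n * w * PBsum a b z w n Prod.fst Prod.fst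
        - b n * PBsum a b z w n Prod.snd Prod.snd
        + a n * b n * w * PBsum a b z w n Prod.snd Prod.fst
        + Tm a b z w (n+1) n Prod.fst Prod.snd := by
  unfold PBsum
  rw [Finset.sum_range_succ]
  congr 1
  rw [Finset.sum_congr rfl (fun k hk => show Tm a b z w (n+1) k Prod.fst Prod.snd
      = z * Tm a b z w n k Prod.fst Prod.snd
        - z * a n * w * Tm a b z w n k Prod.fst Prod.fst
        - b n * Tm a b z w n k Prod.snd Prod.snd
        + a n * b n * w * Tm a b z w n k Prod.snd Prod.fst by
        have hkn : k ≠ n := Nat.ne_of_lt (Finset.mem_range.mp hk)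
        simp only [Tm, dA, dB, P2, if_neg hkn]; ring)]
  simp only [Finset.sum_add_distrib, Finset.sum_sub_distrib, ← Finset.mul_sum]

lemma PBsum_succ_ff (a b : ℕ → ℂ) (z w : ℂ) (n : ℕ) :
    PBsum a b z w (n+1) Prod.fst Prod.fst
      = z * w * PBsum a b z w n Prod.fst Prod.fst
        - z * b n * PBsum a b z w n Prod.fst Prod.snd
        - b n * w * PBsum a b z w n Prod.snd Prod.fst
        + b n * b n * PBsum a b z w n Prod.snd Prod.snd
        + Tm a b z w (n+1) n Prod.fst Prod.fst := by
  unfold PBsum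
  rw [Finset.sum_range_succ]
  congr 1
  rw [Finset.sum_congr rfl (fun k hk => show Tm a b z w (n+1) k Prod.fst Prod.fst
      = z * w * Tm a b z w n k Prod.fst Prod.fst
        - z * b n * Tm a b z w n k Prod.fst Prod.snd
        - b n * w * Tm a b z w n k Prod.snd Prod.fst
        + b n * b n * Tm a b z w n k Prod.snd Prod.snd by
        have hkn : k ≠ n := Nat.ne_of_lt (Finset.mem_range.mp hk)
        simp only [Tm, dA, dB, P2, if_neg hkn]; ring)]
  simp only [Finset.sum_add_distrib, Finset.sum_sub_distrib, ← Finset.mul_sum]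

lemma PBsum_succ_ss (a b : ℕ → ℂ) (z w : ℂ) (n : ℕ) :
    PBsum a b z w (n+1) Prod.snd Prod.snd
      = PBsum a b z w n Prod.snd Prod.snd
        - a n * w * PBsum a b z w n Prod.snd Prod.fst
        - a n * z * PBsum a b z w n Prod.fst Prod.snd
        + a n * a n * z * w * PBsum a b z w n Prod.fst Prod.fst
        + Tm a b z w (n+1) n Prod.snd Prod.snd := by
  unfold PBsum
  rw [Finset.sum_range_succ]
  congr 1
  rw [Finset.sum_congr rfl (fun k hk => show Tm a b z w (n+1) k Prod.snd Prod.snd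
      = Tm a b z w n k Prod.snd Prod.snd
        - a n * w * Tm a b z w n k Prod.snd Prod.fst
        - a n * z * Tm a b z w n k Prod.fst Prod.snd
        + a n * a n * z * w * Tm a b z w n k Prod.fst Prod.fst by
        have hkn : k ≠ n := Nat.ne_of_lt (Finset.mem_range.mp hk)
        simp only [Tm, dA, dB, P2, if_neg hkn]; ring)]
  simp only [Finset.sum_add_distrib, Finset.sum_sub_distrib, ← Finset.mul_sum]

theorem alg_main (a b : ℕ → ℂ) (n : ℕ) : ∀ z w : ℂ, z ≠ w →
    ((z - w) * PBsum a b z w n Prod.fst Prod.snd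
        = (z - w)/4 * ((P2 a b n z).1 * ((P2 a b n w).2
              - (P2 (fun k => -a k) (fun k => -b k) n w).2)
            + ((P2 a b n z).1 - (P2 (fun k => -a k) (fun k => -b k) n z).1) * (P2 a b n w).2)
          + w * ((P2 a b n z).1 * (P2 a b n w).2 - (P2 a b n w).1 * (P2 a b n z).2))
    ∧ (PBsum a b z w n Prod.fst Prod.fst
        = 1/4 * ((P2 a b n z).1 * (P2 (fun k => -a k) (fun k => -b k) n w).1
            - (P2 (fun k => -a k) (fun k => -b k) n z).1 * (P2 a b n w).1))
    ∧ (PBsum a b z w n Prod.snd Prod.snd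
        = -(1/4) * ((P2 a b n z).2 * (P2 (fun k => -a k) (fun k => -b k) n w).2
            - (P2 (fun k => -a k) (fun k => -b k) n z).2 * (P2 a b n w).2)) := by
  induction n with
  | zero =>
    intro z w _
    simp [PBsum, P2]
  | succ n ih =>
    intro z w hzw
    have IH1 := (ih z w hzw).1
    have IH1' := (ih w z (Ne.symm hzw)).1
    have IH2 := (ih z w hzw).2.1
    have IH3 := (ih z w hzw).2.2
    have hD : z - w ≠ 0 := sub_ne_zero.mpr hzw
    refine ⟨?_, ?_, ?_⟩
    · rw [PBsum_succ_fs, PBsum_antisymm a b z w n Prod.snd Prod.fst]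
      simp only [Tm, dA, dB, P2, dA_zero a b n n z le_rfl, dA_zero a b n n w le_rfl,
        dB_zero a b n n z le_rfl, dB_zero a b n n w le_rfl, Prod.fst_zero, Prod.snd_zero,
        if_true, eq_self_iff_true]
      linear_combination z * IH1 + a n * b n * w * IH1'
        + (z - w) * (-(z * a n * w)) * IH2 + (z - w) * (-(b n)) * IH3
    · apply mul_left_cancel₀ hD
      rw [PBsum_succ_ff, PBsum_antisymm a b z w n Prod.snd Prod.fst]
      simp only [Tm, dA, dB, P2, dA_zero a b n n z le_rfl, dA_zero a b n n w le_rfl,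
        dB_zero a b n n z le_rfl, dB_zero a b n n w le_rfl, Prod.fst_zero, Prod.snd_zero,
        if_true, eq_self_iff_true]
      linear_combination (-(z * b n)) * IH1 + (-(b n * w)) * IH1'
        + (z - w) * z * w * IH2 + (z - w) * (b n)^2 * IH3
    · apply mul_left_cancel₀ hD
      rw [PBsum_succ_ss, PBsum_antisymm a b z w n Prod.snd Prod.fst]
      simp only [Tm, dA, dB, P2, dA_zero a b n n z le_rfl, dA_zero a b n n w le_rfl,
        dB_zero a b n n z le_rfl, dB_zero a b n n w le_rfl, Prod.fst_zero, Prod.snd_zero,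
        if_true, eq_self_iff_true]
      linear_combination (-(a n * z)) * IH1 + (-(a n * w)) * IH1'
        + (z - w) * (a n)^2 * z * w * IH2 + (z - w) * IH3

end PAux

namespace PAux

lemma PhiP_eq (n : ℕ) (z : ℂ) (a : ℕ → ℂ) :
    PhiP n z a = P2 a (fun k => (starRingEnd ℂ) (a k)) n z := by
  induction n with
  | zero => rfl
  | succ n ih => simp only [PhiP, P2, ih]

lemma conj_update (a : ℕ → ℂ) (k : ℕ) (x : ℂ) :
    (fun j => (starRingEnd ℂ) (Function.update a k x j))
      = Function.update (fun j => (starRingEnd ℂ) (a j)) k ((starRingEnd ℂ) x) := by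
  funext j
  by_cases hj : j = k
  · subst hj; simp
  · simp [Function.update_of_ne hj]

lemma Rn_update (a : ℕ → ℂ) (k n : ℕ) (hk : k < n)
    (hr : ((Real.sqrt (1 - Complex.normSq (a k)) : ℝ) : ℂ) ≠ 0) (x : ℂ) :
    Rn n (Function.update a k x)
      = Rn n a * ((Real.sqrt (1 - Complex.normSq (a k)) : ℝ) : ℂ)
          * (((Real.sqrt (1 - Complex.normSq x) : ℝ) : ℂ))⁻¹ := by
  unfold Rn
  have h1 : ∀ j, (((Real.sqrt (1 - Complex.normSq (Function.update a k x j)) : ℝ) : ℂ))⁻¹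
      = Function.update (fun j => (((Real.sqrt (1 - Complex.normSq (a j)) : ℝ) : ℂ))⁻¹) k
          (((Real.sqrt (1 - Complex.normSq x) : ℝ) : ℂ))⁻¹ j := by
    intro j; by_cases hj : j = k
    · subst hj; simp
    · simp [Function.update_of_ne hj]
  rw [Finset.prod_congr rfl (fun j _ => h1 j),
    Finset.prod_update_of_mem (Finset.mem_range.mpr hk),
    ← Finset.mul_prod_erase (Finset.range n) _ (Finset.mem_range.mpr hk)]
  field_simp
  rw [Finset.sdiff_singleton_eq_erase]

lemma Rn_update_ge (a : ℕ → ℂ) (k n : ℕ) (hk : n ≤ k) (x : ℂ) :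
    Rn n (Function.update a k x) = Rn n a :=
  Finset.prod_congr rfl fun j hj => by
    have : j ≠ k := by have := Finset.mem_range.mp hj; omega
    rw [Function.update_of_ne this]

lemma hasDerivAt_affine (c p q : ℂ) :
    HasDerivAt (fun t : ℝ => c + (t : ℂ) * p + (t : ℂ) * q) (p + q) 0 := by
  have h1 : HasDerivAt (fun t : ℝ => ((t : ℝ) : ℂ)) 1 0 := by
    exact (hasDerivAt_id (0:ℝ)).ofReal_comp
  have h2 := ((h1.mul_const p).const_add c).add (h1.mul_const q)
  simp only [one_mul] at h2
  exact h2

lemma hasDerivAt_rho_inv (c0 u : ℝ) (h : 0 < 1 - c0) :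
    HasDerivAt (fun t : ℝ => (Real.sqrt ((1 - c0) - (2*u*t + t^2)))⁻¹)
      (u / (Real.sqrt (1 - c0) * (1 - c0))) 0 := by
  have hpoly : HasDerivAt (fun t : ℝ => 2*u*t + t^2) (2*u) 0 := by
    have h1 : HasDerivAt (fun t : ℝ => 2*u*t) (2*u) 0 := by
      simpa using (hasDerivAt_id (0:ℝ)).const_mul (2*u)
    have h2 : HasDerivAt (fun t : ℝ => t^2) 0 0 := by
      simpa using hasDerivAt_pow 2 (0:ℝ)
    have h3 := h1.add h2
    simp only [add_zero] at h3
    exact h3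
  have hs : HasDerivAt (fun t : ℝ => (1 - c0) - (2*u*t + t^2)) (-(2*u)) 0 :=
    hpoly.const_sub (1 - c0)
  have he : (1 - c0) - (2*u*0 + 0^2) = 1 - c0 := by ring
  have hs0 : (1 - c0) - (2*u*0 + 0^2) ≠ 0 := by rw [he]; exact ne_of_gt h
  have hsq := hs.sqrt hs0
  have hsqrtne : Real.sqrt ((1 - c0) - (2*u*0 + 0^2)) ≠ 0 := by
    rw [he]; exact Real.sqrt_ne_zero'.mpr h
  have hinv := hsq.inv hsqrtne
  refine HasDerivAt.congr_deriv hinv ?_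
  rw [he, Real.sq_sqrt h.le]
  have h1 : Real.sqrt (1 - c0) ≠ 0 := Real.sqrt_ne_zero'.mpr h
  field_simp

lemma normSq_add_real (α : ℂ) (t : ℝ) :
    Complex.normSq (α + (t : ℂ)) = Complex.normSq α + (2*α.re*t + t^2) := by
  simp [Complex.normSq_add, Complex.conj_ofReal, Complex.mul_re, Complex.normSq_ofReal]
  ring

lemma normSq_add_realI (α : ℂ) (t : ℝ) :
    Complex.normSq (α + (t : ℂ) * Complex.I) = Complex.normSq α + (2*α.im*t + t^2) := by
  simp [Complex.normSq_add, Complex.mul_re, Complex.normSq_mul, Complex.normSq_ofReal,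
    Complex.normSq_I]
  ring

end PAux

namespace PAux

lemma duDeriv_core (n k : ℕ) (a : ℕ → ℂ) (G : (ℕ → ℂ) → ℂ) (F1 dAv dBv : ℂ)
    (hk : k < n) (h1 : Complex.normSq (a k) < 1)
    (hG : ∀ x : ℂ, G (Function.update a k x)
        = F1 + (x - a k) * dAv + ((starRingEnd ℂ) x - (starRingEnd ℂ) (a k)) * dBv) :
    duDeriv k (fun a' => Rn n a' * G a') a
      = Rn n a * ((((a k).re : ℝ) : ℂ) / ((((1 - Complex.normSq (a k)) : ℝ) : ℂ)) * F1
          + (dAv + dBv)) := by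
  have hr2 : (0:ℝ) < 1 - Complex.normSq (a k) := by linarith
  have hsq : Real.sqrt (1 - Complex.normSq (a k)) ≠ 0 := Real.sqrt_ne_zero'.mpr hr2
  have hsqC : ((Real.sqrt (1 - Complex.normSq (a k)) : ℝ) : ℂ) ≠ 0 := by
    exact_mod_cast hsq
  have hr2C : (((1 - Complex.normSq (a k)) : ℝ) : ℂ) ≠ 0 := by
    exact_mod_cast ne_of_gt hr2
  have hfun : (fun t : ℝ => (fun a' => Rn n a' * G a') (Function.update a k (a k + (t:ℂ))))
      = fun t : ℝ => ((Rn n a * ((Real.sqrt (1 - Complex.normSq (a k)) : ℝ) : ℂ))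
          * ((((Real.sqrt ((1 - Complex.normSq (a k)) - (2*(a k).re*t + t^2)))⁻¹ : ℝ) : ℂ)))
          * (F1 + (t:ℂ) * dAv + (t:ℂ) * dBv) := by
    funext t
    show Rn n (Function.update a k (a k + (t:ℂ))) * G (Function.update a k (a k + (t:ℂ))) = _
    rw [Rn_update a k n hk hsqC, hG]
    have e1 : Complex.normSq (a k + (t:ℂ))
        = Complex.normSq (a k) + (2*(a k).re*t + t^2) := normSq_add_real (a k) t
    have e2 : (1:ℝ) - (Complex.normSq (a k) + (2*(a k).re*t + t^2))
        = (1 - Complex.normSq (a k)) - (2*(a k).re*t + t^2) := by ring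
    rw [e1, e2]
    have e3 : a k + (t:ℂ) - a k = (t:ℂ) := by ring
    have e4 : (starRingEnd ℂ) (a k + (t:ℂ)) - (starRingEnd ℂ) (a k) = (t:ℂ) := by
      rw [map_add, Complex.conj_ofReal]; ring
    rw [e3, e4, Complex.ofReal_inv]
  have hC := ((hasDerivAt_rho_inv (Complex.normSq (a k)) ((a k).re) hr2).ofReal_comp).const_mul
      (Rn n a * ((Real.sqrt (1 - Complex.normSq (a k)) : ℝ) : ℂ))
  have hAff := hasDerivAt_affine F1 dAv dBv
  have htot := hC.mul hAff
  simp only [Pi.mul_def] at htot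
  rw [duDeriv, hfun, htot.deriv]
  have e5 : (1 - Complex.normSq (a k)) - (2*(a k).re*0 + 0^2) = 1 - Complex.normSq (a k) := by
    ring
  rw [e5]
  have hr2C' : (1:ℂ) - ((Complex.normSq (a k) : ℝ) : ℂ) ≠ 0 := by
    push_cast at hr2C; exact hr2C
  push_cast
  field_simp
  ring
end PAux
namespace PAux

lemma dvDeriv_core (n k : ℕ) (a : ℕ → ℂ) (G : (ℕ → ℂ) → ℂ) (F1 dAv dBv : ℂ)
    (hk : k < n) (h1 : Complex.normSq (a k) < 1)
    (hG : ∀ x : ℂ, G (Function.update a k x)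
        = F1 + (x - a k) * dAv + ((starRingEnd ℂ) x - (starRingEnd ℂ) (a k)) * dBv) :
    dvDeriv k (fun a' => Rn n a' * G a') a
      = Rn n a * ((((a k).im : ℝ) : ℂ) / ((((1 - Complex.normSq (a k)) : ℝ) : ℂ)) * F1
          + (Complex.I * dAv + -(Complex.I * dBv))) := by
  have hr2 : (0:ℝ) < 1 - Complex.normSq (a k) := by linarith
  have hsq : Real.sqrt (1 - Complex.normSq (a k)) ≠ 0 := Real.sqrt_ne_zero'.mpr hr2
  have hsqC : ((Real.sqrt (1 - Complex.normSq (a k)) : ℝ) : ℂ) ≠ 0 := by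
    exact_mod_cast hsq
  have hr2C : (((1 - Complex.normSq (a k)) : ℝ) : ℂ) ≠ 0 := by
    exact_mod_cast ne_of_gt hr2
  have hfun : (fun t : ℝ => (fun a' => Rn n a' * G a')
        (Function.update a k (a k + (t:ℂ) * Complex.I)))
      = fun t : ℝ => ((Rn n a * ((Real.sqrt (1 - Complex.normSq (a k)) : ℝ) : ℂ))
          * ((((Real.sqrt ((1 - Complex.normSq (a k)) - (2*(a k).im*t + t^2)))⁻¹ : ℝ) : ℂ)))
          * (F1 + (t:ℂ) * (Complex.I * dAv) + (t:ℂ) * (-(Complex.I * dBv))) := by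
    funext t
    show Rn n (Function.update a k (a k + (t:ℂ) * Complex.I))
        * G (Function.update a k (a k + (t:ℂ) * Complex.I)) = _
    rw [Rn_update a k n hk hsqC, hG]
    have e1 : Complex.normSq (a k + (t:ℂ) * Complex.I)
        = Complex.normSq (a k) + (2*(a k).im*t + t^2) := normSq_add_realI (a k) t
    have e2 : (1:ℝ) - (Complex.normSq (a k) + (2*(a k).im*t + t^2))
        = (1 - Complex.normSq (a k)) - (2*(a k).im*t + t^2) := by ring
    rw [e1, e2]
    have e3 : a k + (t:ℂ) * Complex.I - a k = (t:ℂ) * Complex.I := by ring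
    have e4 : (starRingEnd ℂ) (a k + (t:ℂ) * Complex.I) - (starRingEnd ℂ) (a k)
        = -((t:ℂ) * Complex.I) := by
      rw [map_add, map_mul, Complex.conj_ofReal, Complex.conj_I]; ring
    rw [e3, e4, Complex.ofReal_inv]
    ring
  have hC := ((hasDerivAt_rho_inv (Complex.normSq (a k)) ((a k).im) hr2).ofReal_comp).const_mul
      (Rn n a * ((Real.sqrt (1 - Complex.normSq (a k)) : ℝ) : ℂ))
  have hAff := hasDerivAt_affine F1 (Complex.I * dAv) (-(Complex.I * dBv))
  have htot := hC.mul hAff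
  simp only [Pi.mul_def] at htot
  rw [dvDeriv, hfun, htot.deriv]
  have e5 : (1 - Complex.normSq (a k)) - (2*(a k).im*0 + 0^2) = 1 - Complex.normSq (a k) := by
    ring
  rw [e5]
  have hr2C' : (1:ℂ) - ((Complex.normSq (a k) : ℝ) : ℂ) ≠ 0 := by
    push_cast at hr2C; exact hr2C
  push_cast
  field_simp
  ring

lemma conj_eq (α : ℂ) : (starRingEnd ℂ) α = ((α.re : ℝ) : ℂ) - ((α.im : ℝ) : ℂ) * Complex.I := by
  apply Complex.ext <;> simp

lemma a_eq (α : ℂ) : α = ((α.re : ℝ) : ℂ) + ((α.im : ℝ) : ℂ) * Complex.I := by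
  apply Complex.ext <;> simp

lemma dAlpha_core (n k : ℕ) (a : ℕ → ℂ) (G : (ℕ → ℂ) → ℂ) (F1 dAv dBv : ℂ)
    (hk : k < n) (h1 : Complex.normSq (a k) < 1)
    (hG : ∀ x : ℂ, G (Function.update a k x)
        = F1 + (x - a k) * dAv + ((starRingEnd ℂ) x - (starRingEnd ℂ) (a k)) * dBv) :
    dAlpha k (fun a' => Rn n a' * G a') a
      = Rn n a * ((starRingEnd ℂ) (a k) / (2 * (1 - (Complex.normSq (a k) : ℂ))) * F1 + dAv) := by
  rw [dAlpha, duDeriv_core n k a G F1 dAv dBv hk h1 hG, dvDeriv_core n k a G F1 dAv dBv hk h1 hG]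
  have hr2 : (0:ℝ) < 1 - Complex.normSq (a k) := by linarith
  have hr2C' : (1:ℂ) - ((Complex.normSq (a k) : ℝ) : ℂ) ≠ 0 := by
    have h2 : (((1 - Complex.normSq (a k)) : ℝ) : ℂ) ≠ 0 := by exact_mod_cast ne_of_gt hr2
    push_cast at h2; exact h2
  obtain ⟨u', v', huv⟩ : ∃ u v : ℝ, a k = (u:ℂ) + (v:ℂ) * Complex.I :=
    ⟨(a k).re, (a k).im, a_eq (a k)⟩
  rw [huv]
  simp only [Complex.add_re, Complex.add_im, Complex.ofReal_re, Complex.ofReal_im,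
    Complex.mul_re, Complex.mul_im, Complex.I_re, Complex.I_im, mul_zero, mul_one, zero_mul,
    sub_zero, zero_add, add_zero, map_add, map_mul, Complex.conj_ofReal, Complex.conj_I]
  rw [huv] at hr2C'
  push_cast
  field_simp
  ring_nf
  simp only [Complex.I_sq]
  ring

lemma dAlphaBar_core (n k : ℕ) (a : ℕ → ℂ) (G : (ℕ → ℂ) → ℂ) (F1 dAv dBv : ℂ)
    (hk : k < n) (h1 : Complex.normSq (a k) < 1)
    (hG : ∀ x : ℂ, G (Function.update a k x)
        = F1 + (x - a k) * dAv + ((starRingEnd ℂ) x - (starRingEnd ℂ) (a k)) * dBv) :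
    dAlphaBar k (fun a' => Rn n a' * G a') a
      = Rn n a * (a k / (2 * (1 - (Complex.normSq (a k) : ℂ))) * F1 + dBv) := by
  rw [dAlphaBar, duDeriv_core n k a G F1 dAv dBv hk h1 hG,
    dvDeriv_core n k a G F1 dAv dBv hk h1 hG]
  have hr2 : (0:ℝ) < 1 - Complex.normSq (a k) := by linarith
  have hr2C' : (1:ℂ) - ((Complex.normSq (a k) : ℝ) : ℂ) ≠ 0 := by
    have h2 : (((1 - Complex.normSq (a k)) : ℝ) : ℂ) ≠ 0 := by exact_mod_cast ne_of_gt hr2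
    push_cast at h2; exact h2
  obtain ⟨u', v', huv⟩ : ∃ u v : ℝ, a k = (u:ℂ) + (v:ℂ) * Complex.I :=
    ⟨(a k).re, (a k).im, a_eq (a k)⟩
  rw [huv]
  simp only [Complex.add_re, Complex.add_im, Complex.ofReal_re, Complex.ofReal_im,
    Complex.mul_re, Complex.mul_im, Complex.I_re, Complex.I_im, mul_zero, mul_one, zero_mul,
    sub_zero, zero_add, add_zero]
  rw [huv] at hr2C'
  push_cast
  field_simp
  ring_nf
  simp only [Complex.I_sq]
  ring

lemma deriv_zero_core (n k : ℕ) (a : ℕ → ℂ) (G : (ℕ → ℂ) → ℂ) (hk : n ≤ k)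
    (hGc : ∀ x : ℂ, G (Function.update a k x) = G a) :
    dAlpha k (fun a' => Rn n a' * G a') a = 0
      ∧ dAlphaBar k (fun a' => Rn n a' * G a') a = 0 := by
  have hu : duDeriv k (fun a' => Rn n a' * G a') a = 0 := by
    rw [duDeriv]
    have h : (fun t : ℝ => (fun a' => Rn n a' * G a') (Function.update a k (a k + (t:ℂ))))
        = fun _ => Rn n a * G a := by
      funext t
      show Rn n (Function.update a k (a k + (t:ℂ))) * G (Function.update a k (a k + (t:ℂ))) = _
      rw [Rn_update_ge a k n hk, hGc]
    rw [h]; exact deriv_const _ _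
  have hv : dvDeriv k (fun a' => Rn n a' * G a') a = 0 := by
    rw [dvDeriv]
    have h : (fun t : ℝ => (fun a' => Rn n a' * G a')
          (Function.update a k (a k + (t:ℂ) * Complex.I)))
        = fun _ => Rn n a * G a := by
      funext t
      show Rn n (Function.update a k (a k + (t:ℂ) * Complex.I))
          * G (Function.update a k (a k + (t:ℂ) * Complex.I)) = _
      rw [Rn_update_ge a k n hk, hGc]
    rw [h]; exact deriv_const _ _
  constructor <;> simp [dAlpha, dAlphaBar, hu, hv]

end PAux

theorem poisson_phi_phiStar (n : ℕ) (z w : ℂ) (hzw : z ≠ w) (a : ℕ → ℂ) (ha : ∀ k, ‖a k‖ < 1) :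
    pb (phiN n z) (phiNStar n w) a =
      Complex.I / 4 * (phiN n z a * (phiNStar n w a - psiNStar n w a)
        + (phiN n z a - psiN n z a) * phiNStar n w a)
      + Complex.I * w / (z - w) * (phiN n z a * phiNStar n w a - phiN n w a * phiNStar n z a) := by
  classical
  set b : ℕ → ℂ := fun j => (starRingEnd ℂ) (a j) with hb
  have hns : ∀ k, Complex.normSq (a k) < 1 := by
    intro k
    rw [← Complex.sq_norm]
    nlinarith [ha k, norm_nonneg (a k)]
  -- affine decompositions
  have hGz : ∀ (x' : ℂ) (k : ℕ) (x : ℂ), (fun a' => Phi n x' a') (Function.update a k x)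
      = (PAux.P2 a b n x').1 + (x - a k) * (PAux.dA a b k n x').1
        + ((starRingEnd ℂ) x - (starRingEnd ℂ) (a k)) * (PAux.dB a b k n x').1 := by
    intro x' k x
    show Phi n x' (Function.update a k x) = _
    rw [Phi, PAux.PhiP_eq, PAux.conj_update a k x, hb, PAux.P2_update]
  have hGzs : ∀ (x' : ℂ) (k : ℕ) (x : ℂ), (fun a' => PhiStar n x' a') (Function.update a k x)
      = (PAux.P2 a b n x').2 + (x - a k) * (PAux.dA a b k n x').2
        + ((starRingEnd ℂ) x - (starRingEnd ℂ) (a k)) * (PAux.dB a b k n x').2 := by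
    intro x' k x
    show PhiStar n x' (Function.update a k x) = _
    rw [PhiStar, PAux.PhiP_eq, PAux.conj_update a k x, hb, PAux.P2_update]
  -- constancy for k ≥ n
  have hCz : ∀ (x' : ℂ) (k : ℕ), n ≤ k → ∀ x : ℂ,
      (fun a' => Phi n x' a') (Function.update a k x) = (fun a' => Phi n x' a') a := by
    intro x' k hk x
    show Phi n x' (Function.update a k x) = Phi n x' a
    rw [Phi, Phi, PAux.PhiP_eq, PAux.PhiP_eq]
    have := PAux.P2_congr (Function.update a k x)
      (fun j => (starRingEnd ℂ) (Function.update a k x j)) a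
      (fun j => (starRingEnd ℂ) (a j)) n x'
      (fun j hj => by
        show Function.update a k x j = a j
        rw [Function.update_of_ne (show j ≠ k by omega)])
      (fun j hj => by
        show (starRingEnd ℂ) (Function.update a k x j) = (starRingEnd ℂ) (a j)
        rw [Function.update_of_ne (show j ≠ k by omega)])
    rw [this]
  have hCzs : ∀ (x' : ℂ) (k : ℕ), n ≤ k → ∀ x : ℂ,
      (fun a' => PhiStar n x' a') (Function.update a k x) = (fun a' => PhiStar n x' a') a := by
    intro x' k hk x
    show PhiStar n x' (Function.update a k x) = PhiStar n x' a
    rw [PhiStar, PhiStar, PAux.PhiP_eq, PAux.PhiP_eq]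
    have := PAux.P2_congr (Function.update a k x)
      (fun j => (starRingEnd ℂ) (Function.update a k x j)) a
      (fun j => (starRingEnd ℂ) (a j)) n x'
      (fun j hj => by
        show Function.update a k x j = a j
        rw [Function.update_of_ne (show j ≠ k by omega)])
      (fun j hj => by
        show (starRingEnd ℂ) (Function.update a k x j) = (starRingEnd ℂ) (a j)
        rw [Function.update_of_ne (show j ≠ k by omega)])
    rw [this]
  -- summand
  set T : ℕ → ℂ := fun k => (1 - (Complex.normSq (a k) : ℂ)) *
    (dAlphaBar k (phiN n z) a * dAlpha k (phiNStar n w) a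
      - dAlpha k (phiN n z) a * dAlphaBar k (phiNStar n w) a) with hT
  have hout : ∀ k ∉ Finset.range n, T k = 0 := by
    intro k hk
    have hk' : n ≤ k := by simpa using Finset.mem_range.not.mp hk
    have h1 := PAux.deriv_zero_core n k a (fun a' => Phi n z a') hk' (hCz z k hk')
    have h2 := PAux.deriv_zero_core n k a (fun a' => PhiStar n w a') hk' (hCzs w k hk')
    have e1 : dAlpha k (phiN n z) a = 0 := h1.1
    have e2 : dAlphaBar k (phiN n z) a = 0 := h1.2
    have e3 : dAlpha k (phiNStar n w) a = 0 := h2.1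
    have e4 : dAlphaBar k (phiNStar n w) a = 0 := h2.2
    rw [hT]
    simp [e1, e2, e3, e4]
  have hin : ∀ k ∈ Finset.range n, T k
      = (Rn n a)^2 * PAux.Tm a b z w n k Prod.fst Prod.snd := by
    intro k hk
    have hkn : k < n := Finset.mem_range.mp hk
    have e1 : dAlpha k (phiN n z) a = Rn n a * ((starRingEnd ℂ) (a k)
        / (2 * (1 - (Complex.normSq (a k) : ℂ))) * (PAux.P2 a b n z).1
          + (PAux.dA a b k n z).1) :=
      PAux.dAlpha_core n k a (fun a' => Phi n z a') _ _ _ hkn (hns k) (hGz z k)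
    have e2 : dAlphaBar k (phiN n z) a = Rn n a * (a k
        / (2 * (1 - (Complex.normSq (a k) : ℂ))) * (PAux.P2 a b n z).1
          + (PAux.dB a b k n z).1) :=
      PAux.dAlphaBar_core n k a (fun a' => Phi n z a') _ _ _ hkn (hns k) (hGz z k)
    have e3 : dAlpha k (phiNStar n w) a = Rn n a * ((starRingEnd ℂ) (a k)
        / (2 * (1 - (Complex.normSq (a k) : ℂ))) * (PAux.P2 a b n w).2
          + (PAux.dA a b k n w).2) :=
      PAux.dAlpha_core n k a (fun a' => PhiStar n w a') _ _ _ hkn (hns k) (hGzs w k)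
    have e4 : dAlphaBar k (phiNStar n w) a = Rn n a * (a k
        / (2 * (1 - (Complex.normSq (a k) : ℂ))) * (PAux.P2 a b n w).2
          + (PAux.dB a b k n w).2) :=
      PAux.dAlphaBar_core n k a (fun a' => PhiStar n w a') _ _ _ hkn (hns k) (hGzs w k)
    rw [hT]
    simp only [e1, e2, e3, e4, PAux.Tm]
    have hns' : ((Complex.normSq (a k) : ℝ) : ℂ) = a k * b k := by
      rw [hb]; exact (Complex.mul_conj (a k)).symm
    rw [hns']
    have hne : (1:ℂ) - a k * b k ≠ 0 := by
      rw [← hns']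
      have : (((1 - Complex.normSq (a k)) : ℝ) : ℂ) ≠ 0 := by
        exact_mod_cast ne_of_gt (by linarith [hns k] : (0:ℝ) < 1 - Complex.normSq (a k))
      push_cast at this
      convert this using 1
    field_simp
    ring
  have hpb : pb (phiN n z) (phiNStar n w) a
      = Complex.I * ((Rn n a)^2 * PAux.PBsum a b z w n Prod.fst Prod.snd) := by
    rw [pb]
    rw [show (∑' (k:ℕ), (1 - (Complex.normSq (a k) : ℂ)) *
        (dAlphaBar k (phiN n z) a * dAlpha k (phiNStar n w) a
          - dAlpha k (phiN n z) a * dAlphaBar k (phiNStar n w) a)) = ∑ k ∈ Finset.range n, T k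
      from tsum_eq_sum hout]
    rw [Finset.sum_congr rfl hin, ← Finset.mul_sum]
    rfl
  -- value identifications
  have hvz : phiN n z a = Rn n a * (PAux.P2 a b n z).1 := by
    rw [phiN, Phi, PAux.PhiP_eq, hb]
  have hvw : phiN n w a = Rn n a * (PAux.P2 a b n w).1 := by
    rw [phiN, Phi, PAux.PhiP_eq, hb]
  have hvzs : phiNStar n z a = Rn n a * (PAux.P2 a b n z).2 := by
    rw [phiNStar, PhiStar, PAux.PhiP_eq, hb]
  have hvws : phiNStar n w a = Rn n a * (PAux.P2 a b n w).2 := by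
    rw [phiNStar, PhiStar, PAux.PhiP_eq, hb]
  have hneg : (fun j => (starRingEnd ℂ) ((fun k => -a k) j)) = fun j => -b j := by
    funext j; rw [hb]; simp
  have hpz : psiN n z a = Rn n a * (PAux.P2 (fun j => -a j) (fun j => -b j) n z).1 := by
    rw [psiN, Psi, Phi, PAux.PhiP_eq, hneg]
  have hpws : psiNStar n w a = Rn n a * (PAux.P2 (fun j => -a j) (fun j => -b j) n w).2 := by
    rw [psiNStar, PsiStar, PhiStar, PAux.PhiP_eq, hneg]
  have halg := (PAux.alg_main a b n z w hzw).1
  have hD : z - w ≠ 0 := sub_ne_zero.mpr hzw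
  rw [hpb, hvz, hvw, hvzs, hvws, hpz, hpws]
  field_simp
  linear_combination (4 * (Rn n a)^2) * halg
end

section
/- For every n ≥ 0 and all z, w ∈ ℂ with z ≠ w, the Poisson bracket {φ_n(z), ψ_n^*(w)} = (i/4)·[(φ_n(z) − ψ_n(z))·φ_n^*(w) − ψ_n(z)·(φ_n^*(w) − ψ_n^*(w))] − (i·w/(z−w))·(ψ_n(z)·φ_n^*(w) − ψ_n(w)·φ_n^*(z)). -/
open Complex

noncomputable def sInvC (s : ℂ) : ℂ := ((Real.sqrt (1 - Complex.normSq s) : ℝ) : ℂ)⁻¹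

lemma normSq_add_ofReal (α : ℂ) (t : ℝ) :
    Complex.normSq (α + (t : ℂ)) = Complex.normSq α + (2 * α.re * t + t ^ 2) := by
  simp [Complex.normSq_apply]; ring

lemma normSq_add_ofReal_mul_I (α : ℂ) (t : ℝ) :
    Complex.normSq (α + (t : ℂ) * Complex.I) = Complex.normSq α + (2 * α.im * t + t ^ 2) := by
  simp [Complex.normSq_apply]; ring

lemma aux_sqrt_inv (y e : ℝ) (hy : 0 < y) :
    HasDerivAt (fun t : ℝ => (Real.sqrt (y - (2 * e * t + t ^ 2)))⁻¹)
      (e * ((Real.sqrt y)⁻¹) ^ 3) 0 := by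
  have h1 : HasDerivAt (fun t : ℝ => t) 1 0 := hasDerivAt_id 0
  have hu : HasDerivAt (fun t : ℝ => y - (2 * e * t + t ^ 2)) (-(2 * e)) 0 := by
    have h2 : HasDerivAt (fun t : ℝ => 2 * e * t + t ^ 2) (2 * e) 0 := by
      have := (h1.const_mul (2 * e)).fun_add (h1.fun_pow 2)
      simpa using this
    simpa using (hasDerivAt_const 0 y).fun_sub h2
  have hsqrt : HasDerivAt (fun t : ℝ => Real.sqrt (y - (2 * e * t + t ^ 2)))
      (1 / (2 * Real.sqrt y) * (-(2 * e))) 0 := by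
    have hy' : (y - (2 * e * 0 + 0 ^ 2)) ≠ 0 := by simpa using hy.ne'
    have := (Real.hasDerivAt_sqrt (by simpa using hy.ne')).comp 0 hu
    simpa [Function.comp_def] using this
  have hs0 : Real.sqrt (y - (2 * e * 0 + 0 ^ 2)) ≠ 0 := by
    simpa using (Real.sqrt_pos.mpr hy).ne'
  have := hsqrt.inv (by simpa using hs0)
  refine this.congr_deriv ?_
  have hsy : Real.sqrt y ≠ 0 := (Real.sqrt_pos.mpr hy).ne'
  have h3 : (Real.sqrt y) ^ 3 = y * Real.sqrt y := by
    rw [pow_succ, Real.sq_sqrt hy.le]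
  rw [show y - (2 * e * 0 + 0 ^ 2) = y by ring]
  field_simp

lemma ofReal_path_hasDerivAt : HasDerivAt (fun t : ℝ => (t : ℂ)) 1 0 := by
  exact Complex.ofRealCLM.hasDerivAt (x := (0:ℝ))

lemma masterDu (k : ℕ) (a : ℕ → ℂ) (h : Complex.normSq (a k) < 1)
    (F : (ℕ → ℂ) → ℂ) (E A B C : ℂ)
    (hF : ∀ s, F (Function.update a k s) =
      E * sInvC s * (A + B * s + C * (starRingEnd ℂ s))) :
    HasDerivAt (fun t : ℝ => F (Function.update a k (a k + (t : ℂ))))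
      (E * (((a k).re : ℂ) * (sInvC (a k)) ^ 3 * (A + B * a k + C * (starRingEnd ℂ (a k)))
        + sInvC (a k) * (B + C))) 0 := by
  set α := a k with hα
  set y : ℝ := 1 - Complex.normSq α with hy
  have hy0 : 0 < y := by simp only [hy]; linarith
  -- real sqrt-inverse part
  have hv : HasDerivAt (fun t : ℝ => (Real.sqrt (y - (2 * α.re * t + t ^ 2)))⁻¹)
      (α.re * ((Real.sqrt y)⁻¹) ^ 3) 0 := aux_sqrt_inv y α.re hy0
  have hvC : HasDerivAt (fun t : ℝ => ((Real.sqrt (y - (2 * α.re * t + t ^ 2)))⁻¹ : ℂ))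
      ((α.re : ℂ) * (((Real.sqrt y)⁻¹ : ℝ) : ℂ) ^ 3) 0 := by
    have := hv.ofReal_comp (z := 0)
    rw [show ((α.re : ℂ) * (((Real.sqrt y)⁻¹ : ℝ) : ℂ) ^ 3)
        = ((α.re * (Real.sqrt y)⁻¹ ^ 3 : ℝ) : ℂ) by push_cast; ring]
    simp_rw [Complex.ofReal_inv] at this
    exact this
  -- affine part
  have ht : HasDerivAt (fun t : ℝ => (t : ℂ)) 1 0 := ofReal_path_hasDerivAt
  have hL : HasDerivAt (fun t : ℝ => A + B * (α + (t : ℂ)) + C * (starRingEnd ℂ α + (t : ℂ)))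
      (B + C) 0 := by
    have h1 : HasDerivAt (fun t : ℝ => B * (α + (t : ℂ))) B 0 := by
      simpa using ((ht.const_add α).const_mul B)
    have h2 : HasDerivAt (fun t : ℝ => C * (starRingEnd ℂ α + (t : ℂ))) C 0 := by
      simpa using ((ht.const_add (starRingEnd ℂ α)).const_mul C)
    simpa using (h1.const_add A).fun_add h2
  have hprod := ((hvC.const_mul E).mul hL)
  have hEq : (fun t : ℝ => (E * ((Real.sqrt (y - (2 * α.re * t + t ^ 2)))⁻¹ : ℂ)) *
      (A + B * (α + (t : ℂ)) + C * (starRingEnd ℂ α + (t : ℂ))))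
      = (fun t : ℝ => F (Function.update a k (a k + (t : ℂ)))) := by
    funext t
    rw [hF (a k + (t : ℂ))]
    have h1 : sInvC (a k + (t : ℂ)) = ((Real.sqrt (y - (2 * α.re * t + t ^ 2)))⁻¹ : ℂ) := by
      rw [sInvC, normSq_add_ofReal]
      have h2 : 1 - (Complex.normSq (a k) + (2 * (a k).re * t + t ^ 2))
          = y - (2 * α.re * t + t ^ 2) := by
        rw [hy, hα]; ring
      rw [h2]
    rw [h1, map_add, Complex.conj_ofReal, ← hα]
  have hfinal := hprod.congr_of_eventuallyEq
    (Filter.Eventually.of_forall (fun t => (congrFun hEq t).symm))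
  refine hfinal.congr_deriv ?_
  have hsy : sInvC α = (((Real.sqrt y)⁻¹ : ℝ) : ℂ) := by
    rw [sInvC, ← hy, Complex.ofReal_inv]
  have h0 : y - (2 * α.re * 0 + 0 ^ 2) = y := by ring
  rw [h0, hsy]
  push_cast
  ring

lemma masterDv (k : ℕ) (a : ℕ → ℂ) (h : Complex.normSq (a k) < 1)
    (F : (ℕ → ℂ) → ℂ) (E A B C : ℂ)
    (hF : ∀ s, F (Function.update a k s) =
      E * sInvC s * (A + B * s + C * (starRingEnd ℂ s))) :
    HasDerivAt (fun t : ℝ => F (Function.update a k (a k + (t : ℂ) * Complex.I)))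
      (E * (((a k).im : ℂ) * (sInvC (a k)) ^ 3 * (A + B * a k + C * (starRingEnd ℂ (a k)))
        + sInvC (a k) * (B * Complex.I - C * Complex.I))) 0 := by
  set α := a k with hα
  set y : ℝ := 1 - Complex.normSq α with hy
  have hy0 : 0 < y := by simp only [hy]; linarith
  have hv : HasDerivAt (fun t : ℝ => (Real.sqrt (y - (2 * α.im * t + t ^ 2)))⁻¹)
      (α.im * ((Real.sqrt y)⁻¹) ^ 3) 0 := aux_sqrt_inv y α.im hy0
  have hvC : HasDerivAt (fun t : ℝ => ((Real.sqrt (y - (2 * α.im * t + t ^ 2)) : ℝ) : ℂ)⁻¹)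
      ((α.im : ℂ) * (((Real.sqrt y)⁻¹ : ℝ) : ℂ) ^ 3) 0 := by
    have := hv.ofReal_comp (z := 0)
    rw [show ((α.im : ℂ) * (((Real.sqrt y)⁻¹ : ℝ) : ℂ) ^ 3)
        = ((α.im * (Real.sqrt y)⁻¹ ^ 3 : ℝ) : ℂ) by push_cast; ring]
    simp_rw [Complex.ofReal_inv] at this
    exact this
  have ht : HasDerivAt (fun t : ℝ => (t : ℂ) * Complex.I) Complex.I 0 := by
    simpa using ofReal_path_hasDerivAt.mul_const Complex.I
  have hL : HasDerivAt (fun t : ℝ => A + B * (α + (t : ℂ) * Complex.I)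
      + C * (starRingEnd ℂ α - (t : ℂ) * Complex.I)) (B * Complex.I - C * Complex.I) 0 := by
    have h1 : HasDerivAt (fun t : ℝ => B * (α + (t : ℂ) * Complex.I)) (B * Complex.I) 0 := by
      simpa using ((ht.const_add α).const_mul B)
    have h2 : HasDerivAt (fun t : ℝ => C * (starRingEnd ℂ α - (t : ℂ) * Complex.I))
        (-(C * Complex.I)) 0 := by
      have h3 : HasDerivAt (fun t : ℝ => starRingEnd ℂ α - (t : ℂ) * Complex.I)
          (-Complex.I) 0 := by
        simpa using (hasDerivAt_const (0:ℝ) (starRingEnd ℂ α)).fun_sub ht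
      have := h3.const_mul C
      refine this.congr_deriv ?_
      try ring
    have := (h1.const_add A).fun_add h2
    refine this.congr_deriv ?_
    try ring
  have hprod := ((hvC.const_mul E).mul hL)
  have hEq : (fun t : ℝ => (E * (((Real.sqrt (y - (2 * α.im * t + t ^ 2)) : ℝ) : ℂ))⁻¹) *
      (A + B * (α + (t : ℂ) * Complex.I) + C * (starRingEnd ℂ α - (t : ℂ) * Complex.I)))
      = (fun t : ℝ => F (Function.update a k (a k + (t : ℂ) * Complex.I))) := by
    funext t
    rw [hF (a k + (t : ℂ) * Complex.I)]
    have h1 : sInvC (a k + (t : ℂ) * Complex.I)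
        = (((Real.sqrt (y - (2 * α.im * t + t ^ 2)) : ℝ) : ℂ))⁻¹ := by
      rw [sInvC, normSq_add_ofReal_mul_I]
      have h2 : 1 - (Complex.normSq (a k) + (2 * (a k).im * t + t ^ 2))
          = y - (2 * α.im * t + t ^ 2) := by
        rw [hy, hα]; ring
      rw [h2]
    rw [h1, map_add, map_mul, Complex.conj_ofReal, Complex.conj_I, ← hα]
    try ring
  have hfinal := hprod.congr_of_eventuallyEq
    (Filter.Eventually.of_forall (fun t => (congrFun hEq t).symm))
  refine hfinal.congr_deriv ?_
  have hsy : sInvC α = (((Real.sqrt y)⁻¹ : ℝ) : ℂ) := by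
    rw [sInvC, ← hy, Complex.ofReal_inv]
  have h0 : y - (2 * α.im * 0 + 0 ^ 2) = y := by ring
  rw [h0, hsy]
  push_cast
  ring

lemma conj_eq_re_sub_im (α : ℂ) : starRingEnd ℂ α = (α.re : ℂ) - (α.im : ℂ) * Complex.I := by
  simp [Complex.ext_iff]

lemma master_dAlpha (k : ℕ) (a : ℕ → ℂ) (h : Complex.normSq (a k) < 1)
    (F : (ℕ → ℂ) → ℂ) (E A B C : ℂ)
    (hF : ∀ s, F (Function.update a k s) =
      E * sInvC s * (A + B * s + C * (starRingEnd ℂ s))) :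
    dAlpha k F a = E * ((starRingEnd ℂ (a k)) / 2 * (sInvC (a k)) ^ 3 *
        (A + B * a k + C * (starRingEnd ℂ (a k))) + sInvC (a k) * B)
    ∧ dAlphaBar k F a = E * ((a k) / 2 * (sInvC (a k)) ^ 3 *
        (A + B * a k + C * (starRingEnd ℂ (a k))) + sInvC (a k) * C) := by
  have hdu : duDeriv k F a = E * (((a k).re : ℂ) * (sInvC (a k)) ^ 3 *
      (A + B * a k + C * (starRingEnd ℂ (a k))) + sInvC (a k) * (B + C)) :=
    (masterDu k a h F E A B C hF).deriv
  have hdv : dvDeriv k F a = E * (((a k).im : ℂ) * (sInvC (a k)) ^ 3 *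
      (A + B * a k + C * (starRingEnd ℂ (a k))) + sInvC (a k) * (B * Complex.I - C * Complex.I)) :=
    (masterDv k a h F E A B C hF).deriv
  have hconj : starRingEnd ℂ (a k) = ((a k).re : ℂ) - ((a k).im : ℂ) * Complex.I :=
    conj_eq_re_sub_im (a k)
  have hdec : a k = ((a k).re : ℂ) + ((a k).im : ℂ) * Complex.I := (Complex.re_add_im (a k)).symm
  constructor
  · rw [dAlpha, hdu, hdv, hconj]
    ring_nf
    simp only [Complex.I_sq]
    ring
  · rw [dAlphaBar, hdu, hdv, hconj]
    linear_combination (-(E * sInvC (a k) ^ 3 *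
        (A + B * a k + C * (((a k).re : ℂ) - ((a k).im : ℂ) * Complex.I)) / 2)) * hdec
      + (E * sInvC (a k) * (B - C) / 2) * Complex.I_sq



lemma phiP_congr (n : ℕ) (z : ℂ) {a b : ℕ → ℂ} (h : ∀ j, j < n → a j = b j) :
    PhiP n z a = PhiP n z b := by
  induction n with
  | zero => rfl
  | succ n ih =>
    have h1 := ih (fun j hj => h j (Nat.lt_succ_of_lt hj))
    simp only [PhiP, h1, h n (Nat.lt_succ_self n)]

lemma rn_congr (n : ℕ) {a b : ℕ → ℂ} (h : ∀ j, j < n → a j = b j) : Rn n a = Rn n b :=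
  Finset.prod_congr rfl (fun j hj => by rw [h j (Finset.mem_range.mp hj)])

lemma phiN_congr (n : ℕ) (z : ℂ) {a b : ℕ → ℂ} (h : ∀ j, j < n → a j = b j) :
    phiN n z a = phiN n z b ∧ phiNStar n z a = phiNStar n z b ∧
    psiN n z a = psiN n z b ∧ psiNStar n z a = psiNStar n z b := by
  have h2 : ∀ j, j < n → (fun i => -a i) j = (fun i => -b i) j := fun j hj => by
    simp [h j hj]
  refine ⟨?_, ?_, ?_, ?_⟩ <;>
    simp only [phiN, phiNStar, psiN, psiNStar, Phi, PhiStar, Psi, PsiStar,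
      rn_congr n h, phiP_congr n z h, phiP_congr n z h2]

lemma update_agree {a : ℕ → ℂ} {k n : ℕ} (hk : n ≤ k) (s : ℂ) :
    ∀ j, j < n → Function.update a k s j = a j := fun j hj =>
  Function.update_of_ne (by omega) s a

lemma dAlpha_of_const (k : ℕ) (F : (ℕ → ℂ) → ℂ) (a : ℕ → ℂ)
    (hF : ∀ s, F (Function.update a k s) = F a) :
    dAlpha k F a = 0 ∧ dAlphaBar k F a = 0 := by
  have hu : duDeriv k F a = 0 := by
    rw [duDeriv]
    have : (fun t : ℝ => F (Function.update a k (a k + (t : ℂ)))) = fun _ => F a := by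
      funext t; rw [hF]
    rw [this, deriv_const]
  have hv : dvDeriv k F a = 0 := by
    rw [dvDeriv]
    have : (fun t : ℝ => F (Function.update a k (a k + (t : ℂ) * Complex.I))) = fun _ => F a := by
      funext t; rw [hF]
    rw [this, deriv_const]
  constructor <;> simp [dAlpha, dAlphaBar, hu, hv]

lemma rn_succ (n : ℕ) (a : ℕ → ℂ) : Rn (n + 1) a = Rn n a * sInvC (a n) :=
  Finset.prod_range_succ _ n

lemma phi_succ (n : ℕ) (z : ℂ) (a : ℕ → ℂ) :
    Phi (n + 1) z a = z * Phi n z a - starRingEnd ℂ (a n) * PhiStar n z a := rfl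

lemma phiStar_succ (n : ℕ) (z : ℂ) (a : ℕ → ℂ) :
    PhiStar (n + 1) z a = PhiStar n z a - a n * z * Phi n z a := rfl

lemma psi_succ (n : ℕ) (z : ℂ) (a : ℕ → ℂ) :
    Psi (n + 1) z a = z * Psi n z a + starRingEnd ℂ (a n) * PsiStar n z a := by
  simp only [Psi, PsiStar, phi_succ, map_neg]
  ring

lemma psiStar_succ (n : ℕ) (z : ℂ) (a : ℕ → ℂ) :
    PsiStar (n + 1) z a = PsiStar n z a + a n * z * Psi n z a := by
  simp only [Psi, PsiStar, phiStar_succ]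
  ring

lemma phiN_succ (n : ℕ) (z : ℂ) (a : ℕ → ℂ) :
    phiN (n + 1) z a = sInvC (a n) * (z * phiN n z a - starRingEnd ℂ (a n) * phiNStar n z a) := by
  simp only [phiN, phiNStar, rn_succ, phi_succ]; ring

lemma phiNStar_succ (n : ℕ) (z : ℂ) (a : ℕ → ℂ) :
    phiNStar (n + 1) z a = sInvC (a n) * (phiNStar n z a - a n * z * phiN n z a) := by
  simp only [phiN, phiNStar, rn_succ, phiStar_succ]; ring

lemma psiN_succ (n : ℕ) (z : ℂ) (a : ℕ → ℂ) :
    psiN (n + 1) z a = sInvC (a n) * (z * psiN n z a + starRingEnd ℂ (a n) * psiNStar n z a) := by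
  simp only [psiN, psiNStar, rn_succ, psi_succ]; ring

lemma psiNStar_succ (n : ℕ) (z : ℂ) (a : ℕ → ℂ) :
    psiNStar (n + 1) z a = sInvC (a n) * (psiNStar n z a + a n * z * psiN n z a) := by
  simp only [psiN, psiNStar, rn_succ, psiStar_succ]; ring


lemma phi_rep (n k : ℕ) (hk : k < n) (z : ℂ) (a : ℕ → ℂ) :
    ∃ A B C A' B' C' : ℂ, ∀ s : ℂ,
      Phi n z (Function.update a k s) = A + B * s + C * starRingEnd ℂ s ∧
      PhiStar n z (Function.update a k s) = A' + B' * s + C' * starRingEnd ℂ s := by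
  induction n with
  | zero => omega
  | succ n ih =>
    rcases Nat.lt_succ_iff_lt_or_eq.mp hk with h | h
    · obtain ⟨A, B, C, A', B', C', hs⟩ := ih h
      refine ⟨z * A - starRingEnd ℂ (a n) * A', z * B - starRingEnd ℂ (a n) * B',
        z * C - starRingEnd ℂ (a n) * C', A' - a n * z * A, B' - a n * z * B,
        C' - a n * z * C, fun s => ?_⟩
      obtain ⟨h1, h2⟩ := hs s
      have hn : Function.update a k s n = a n := Function.update_of_ne (by omega) s a
      rw [phi_succ, phiStar_succ, h1, h2, hn]
      constructor <;> ring
    · subst h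
      have hag : ∀ s : ℂ, ∀ j, j < k → Function.update a k s j = a j :=
        fun s => update_agree le_rfl s
      refine ⟨z * Phi k z a, 0, -(PhiStar k z a), PhiStar k z a, -(z * Phi k z a), 0,
        fun s => ?_⟩
      have hn : Function.update a k s k = s := Function.update_self k s a
      have hP : Phi k z (Function.update a k s) = Phi k z a := by
        simp only [Phi, phiP_congr k z (hag s)]
      have hPs : PhiStar k z (Function.update a k s) = PhiStar k z a := by
        simp only [PhiStar, phiP_congr k z (hag s)]
      rw [phi_succ, phiStar_succ, hP, hPs, hn]
      constructor <;> ring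

lemma neg_update (a : ℕ → ℂ) (k : ℕ) (s : ℂ) :
    (fun j => -(Function.update a k s j)) = Function.update (fun j => -a j) k (-s) := by
  funext j
  rcases eq_or_ne j k with h | h
  · subst h; simp
  · simp [Function.update_of_ne h]

lemma psi_rep (n k : ℕ) (hk : k < n) (z : ℂ) (a : ℕ → ℂ) :
    ∃ A B C A' B' C' : ℂ, ∀ s : ℂ,
      Psi n z (Function.update a k s) = A + B * s + C * starRingEnd ℂ s ∧
      PsiStar n z (Function.update a k s) = A' + B' * s + C' * starRingEnd ℂ s := by
  obtain ⟨A, B, C, A', B', C', hs⟩ := phi_rep n k hk z (fun j => -a j)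
  refine ⟨A, -B, -C, A', -B', -C', fun s => ?_⟩
  obtain ⟨h1, h2⟩ := hs (-s)
  rw [Psi, PsiStar, neg_update, h1, h2, map_neg]
  constructor <;> ring

lemma rn_update (n k : ℕ) (hk : k < n) (a : ℕ → ℂ) (s : ℂ) :
    Rn n (Function.update a k s) =
      (∏ j ∈ Finset.range n \ {k}, ((Real.sqrt (1 - Complex.normSq (a j)) : ℝ) : ℂ)⁻¹)
        * sInvC s := by
  have hmem : k ∈ Finset.range n := Finset.mem_range.mpr hk
  rw [Rn, Finset.prod_eq_prod_diff_singleton_mul hmem]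
  congr 1
  · refine Finset.prod_congr rfl (fun j hj => ?_)
    rw [Function.update_of_ne (Finset.notMem_singleton.mp (Finset.mem_sdiff.mp hj).2)]
  · rw [Function.update_self]
    rfl

lemma rn_update_self (n k : ℕ) (hk : k < n) (a : ℕ → ℂ) :
    Rn n a =
      (∏ j ∈ Finset.range n \ {k}, ((Real.sqrt (1 - Complex.normSq (a j)) : ℝ) : ℂ)⁻¹)
        * sInvC (a k) := by
  have h := rn_update n k hk a (a k)
  rwa [Function.update_eq_self] at h


lemma rep_four (n k : ℕ) (hk : k < n) (z : ℂ) (a : ℕ → ℂ) :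
    ∃ E A1 B1 C1 A2 B2 C2 A3 B3 C3 A4 B4 C4 : ℂ,
      (∀ s, phiN n z (Function.update a k s) = E * sInvC s * (A1 + B1 * s + C1 * starRingEnd ℂ s)) ∧
      (∀ s, phiNStar n z (Function.update a k s) = E * sInvC s * (A2 + B2 * s + C2 * starRingEnd ℂ s)) ∧
      (∀ s, psiN n z (Function.update a k s) = E * sInvC s * (A3 + B3 * s + C3 * starRingEnd ℂ s)) ∧
      (∀ s, psiNStar n z (Function.update a k s) = E * sInvC s * (A4 + B4 * s + C4 * starRingEnd ℂ s)) := by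
  obtain ⟨A1, B1, C1, A2, B2, C2, hphi⟩ := phi_rep n k hk z a
  obtain ⟨A3, B3, C3, A4, B4, C4, hpsi⟩ := psi_rep n k hk z a
  refine ⟨∏ j ∈ Finset.range n \ {k}, ((Real.sqrt (1 - Complex.normSq (a j)) : ℝ) : ℂ)⁻¹,
    A1, B1, C1, A2, B2, C2, A3, B3, C3, A4, B4, C4, ?_, ?_, ?_, ?_⟩ <;>
    intro s <;>
    [rw [phiN, rn_update n k hk a s, (hphi s).1];
     rw [phiNStar, rn_update n k hk a s, (hphi s).2];
     rw [psiN, rn_update n k hk a s, (hpsi s).1];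
     rw [psiNStar, rn_update n k hk a s, (hpsi s).2]] <;> ring

lemma diff_four (n k : ℕ) (hk : k < n) (z : ℂ) (a : ℕ → ℂ) (h : Complex.normSq (a k) < 1) :
    (DifferentiableAt ℝ (fun t : ℝ => phiN n z (Function.update a k (a k + (t : ℂ)))) 0 ∧
     DifferentiableAt ℝ (fun t : ℝ => phiN n z (Function.update a k (a k + (t : ℂ) * Complex.I))) 0) ∧
    (DifferentiableAt ℝ (fun t : ℝ => phiNStar n z (Function.update a k (a k + (t : ℂ)))) 0 ∧
     DifferentiableAt ℝ (fun t : ℝ => phiNStar n z (Function.update a k (a k + (t : ℂ) * Complex.I))) 0) ∧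
    (DifferentiableAt ℝ (fun t : ℝ => psiN n z (Function.update a k (a k + (t : ℂ)))) 0 ∧
     DifferentiableAt ℝ (fun t : ℝ => psiN n z (Function.update a k (a k + (t : ℂ) * Complex.I))) 0) ∧
    (DifferentiableAt ℝ (fun t : ℝ => psiNStar n z (Function.update a k (a k + (t : ℂ)))) 0 ∧
     DifferentiableAt ℝ (fun t : ℝ => psiNStar n z (Function.update a k (a k + (t : ℂ) * Complex.I))) 0) := by
  obtain ⟨E, A1, B1, C1, A2, B2, C2, A3, B3, C3, A4, B4, C4, h1, h2, h3, h4⟩ :=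
    rep_four n k hk z a
  exact ⟨⟨(masterDu k a h _ E A1 B1 C1 h1).differentiableAt,
          (masterDv k a h _ E A1 B1 C1 h1).differentiableAt⟩,
         ⟨(masterDu k a h _ E A2 B2 C2 h2).differentiableAt,
          (masterDv k a h _ E A2 B2 C2 h2).differentiableAt⟩,
         ⟨(masterDu k a h _ E A3 B3 C3 h3).differentiableAt,
          (masterDv k a h _ E A3 B3 C3 h3).differentiableAt⟩,
         ⟨(masterDu k a h _ E A4 B4 C4 h4).differentiableAt,
          (masterDv k a h _ E A4 B4 C4 h4).differentiableAt⟩⟩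

lemma dAlpha_comb (k : ℕ) (F G H : (ℕ → ℂ) → ℂ) (a : ℕ → ℂ) (c₁ c₂ : ℂ)
    (hH : ∀ s, H (Function.update a k s) =
      c₁ * F (Function.update a k s) + c₂ * G (Function.update a k s))
    (hFu : DifferentiableAt ℝ (fun t : ℝ => F (Function.update a k (a k + (t : ℂ)))) 0)
    (hFv : DifferentiableAt ℝ (fun t : ℝ => F (Function.update a k (a k + (t : ℂ) * Complex.I))) 0)
    (hGu : DifferentiableAt ℝ (fun t : ℝ => G (Function.update a k (a k + (t : ℂ)))) 0)
    (hGv : DifferentiableAt ℝ (fun t : ℝ => G (Function.update a k (a k + (t : ℂ) * Complex.I))) 0) :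
    dAlpha k H a = c₁ * dAlpha k F a + c₂ * dAlpha k G a ∧
    dAlphaBar k H a = c₁ * dAlphaBar k F a + c₂ * dAlphaBar k G a := by
  have hu : duDeriv k H a = c₁ * duDeriv k F a + c₂ * duDeriv k G a := by
    rw [duDeriv, duDeriv, duDeriv]
    have hfun : (fun t : ℝ => H (Function.update a k (a k + (t : ℂ))))
        = fun t : ℝ => c₁ * F (Function.update a k (a k + (t : ℂ)))
          + c₂ * G (Function.update a k (a k + (t : ℂ))) := by
      funext t; rw [hH]
    rw [hfun, deriv_fun_add (hFu.const_mul c₁) (hGu.const_mul c₂),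
      deriv_const_mul c₁ hFu, deriv_const_mul c₂ hGu]
  have hv : dvDeriv k H a = c₁ * dvDeriv k F a + c₂ * dvDeriv k G a := by
    rw [dvDeriv, dvDeriv, dvDeriv]
    have hfun : (fun t : ℝ => H (Function.update a k (a k + (t : ℂ) * Complex.I)))
        = fun t : ℝ => c₁ * F (Function.update a k (a k + (t : ℂ) * Complex.I))
          + c₂ * G (Function.update a k (a k + (t : ℂ) * Complex.I)) := by
      funext t; rw [hH]
    rw [hfun, deriv_fun_add (hFv.const_mul c₁) (hGv.const_mul c₂),
      deriv_const_mul c₁ hFv, deriv_const_mul c₂ hGv]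
  constructor
  · rw [dAlpha, dAlpha, dAlpha, hu, hv]; ring
  · rw [dAlphaBar, dAlphaBar, dAlphaBar, hu, hv]; ring


lemma vanish_four (n k : ℕ) (hk : n ≤ k) (z : ℂ) (a : ℕ → ℂ) :
    (dAlpha k (phiN n z) a = 0 ∧ dAlphaBar k (phiN n z) a = 0) ∧
    (dAlpha k (phiNStar n z) a = 0 ∧ dAlphaBar k (phiNStar n z) a = 0) ∧
    (dAlpha k (psiN n z) a = 0 ∧ dAlphaBar k (psiN n z) a = 0) ∧
    (dAlpha k (psiNStar n z) a = 0 ∧ dAlphaBar k (psiNStar n z) a = 0) := by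
  have h := fun s : ℂ => phiN_congr n z (update_agree (a := a) hk s)
  exact ⟨dAlpha_of_const k _ a (fun s => (h s).1),
    dAlpha_of_const k _ a (fun s => (h s).2.1),
    dAlpha_of_const k _ a (fun s => (h s).2.2.1),
    dAlpha_of_const k _ a (fun s => (h s).2.2.2)⟩

lemma d1_all (n k : ℕ) (hk : k < n) (z w : ℂ) (a : ℕ → ℂ) (h : Complex.normSq (a k) < 1) :
    (dAlpha k (phiN (n+1) z) a = (sInvC (a n) * z) * dAlpha k (phiN n z) a
        + (-(sInvC (a n) * starRingEnd ℂ (a n))) * dAlpha k (phiNStar n z) a ∧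
     dAlphaBar k (phiN (n+1) z) a = (sInvC (a n) * z) * dAlphaBar k (phiN n z) a
        + (-(sInvC (a n) * starRingEnd ℂ (a n))) * dAlphaBar k (phiNStar n z) a) ∧
    (dAlpha k (phiNStar (n+1) z) a = (-(sInvC (a n) * (a n) * z)) * dAlpha k (phiN n z) a
        + (sInvC (a n)) * dAlpha k (phiNStar n z) a ∧
     dAlphaBar k (phiNStar (n+1) z) a = (-(sInvC (a n) * (a n) * z)) * dAlphaBar k (phiN n z) a
        + (sInvC (a n)) * dAlphaBar k (phiNStar n z) a) ∧
    (dAlpha k (psiN (n+1) w) a = (sInvC (a n) * w) * dAlpha k (psiN n w) a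
        + (sInvC (a n) * starRingEnd ℂ (a n)) * dAlpha k (psiNStar n w) a ∧
     dAlphaBar k (psiN (n+1) w) a = (sInvC (a n) * w) * dAlphaBar k (psiN n w) a
        + (sInvC (a n) * starRingEnd ℂ (a n)) * dAlphaBar k (psiNStar n w) a) ∧
    (dAlpha k (psiNStar (n+1) w) a = (sInvC (a n) * (a n) * w) * dAlpha k (psiN n w) a
        + (sInvC (a n)) * dAlpha k (psiNStar n w) a ∧
     dAlphaBar k (psiNStar (n+1) w) a = (sInvC (a n) * (a n) * w) * dAlphaBar k (psiN n w) a
        + (sInvC (a n)) * dAlphaBar k (psiNStar n w) a) := by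
  have hne : k ≠ n := Nat.ne_of_lt hk
  obtain ⟨⟨hz1u, hz1v⟩, ⟨hz2u, hz2v⟩, _, _⟩ := diff_four n k hk z a h
  obtain ⟨_, _, ⟨hw3u, hw3v⟩, ⟨hw4u, hw4v⟩⟩ := diff_four n k hk w a h
  refine ⟨?_, ?_, ?_, ?_⟩
  · refine dAlpha_comb k _ _ _ a _ _ (fun s => ?_) hz1u hz1v hz2u hz2v
    rw [phiN_succ, Function.update_of_ne (Ne.symm hne)]
    ring
  · refine dAlpha_comb k _ _ _ a _ _ (fun s => ?_) hz1u hz1v hz2u hz2v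
    rw [phiNStar_succ, Function.update_of_ne (Ne.symm hne)]
    ring
  · refine dAlpha_comb k _ _ _ a _ _ (fun s => ?_) hw3u hw3v hw4u hw4v
    rw [psiN_succ, Function.update_of_ne (Ne.symm hne)]
    ring
  · refine dAlpha_comb k _ _ _ a _ _ (fun s => ?_) hw3u hw3v hw4u hw4v
    rw [psiNStar_succ, Function.update_of_ne (Ne.symm hne)]
    ring

lemma rep_top (n : ℕ) (z : ℂ) (a : ℕ → ℂ) :
    (∀ s, phiN (n+1) z (Function.update a n s) = Rn n a * sInvC s *
      (z * Phi n z a + 0 * s + (-(PhiStar n z a)) * starRingEnd ℂ s)) ∧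
    (∀ s, phiNStar (n+1) z (Function.update a n s) = Rn n a * sInvC s *
      (PhiStar n z a + (-(z * Phi n z a)) * s + 0 * starRingEnd ℂ s)) ∧
    (∀ s, psiN (n+1) z (Function.update a n s) = Rn n a * sInvC s *
      (z * Psi n z a + 0 * s + (PsiStar n z a) * starRingEnd ℂ s)) ∧
    (∀ s, psiNStar (n+1) z (Function.update a n s) = Rn n a * sInvC s *
      (PsiStar n z a + (z * Psi n z a) * s + 0 * starRingEnd ℂ s)) := by
  have hag : ∀ s : ℂ, ∀ j, j < n → Function.update a n s j = a j :=
    fun s => update_agree le_rfl s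
  have hRn : ∀ s : ℂ, Rn (n+1) (Function.update a n s) = Rn n a * sInvC s := by
    intro s
    rw [rn_succ, rn_congr n (hag s), Function.update_self]
  have hag2 : ∀ s : ℂ, ∀ j, j < n →
      (fun i => -(Function.update a n s i)) j = (fun i => -a i) j := fun s j hj => by
    simp [hag s j hj]
  have hPhi : ∀ s : ℂ, Phi n z (Function.update a n s) = Phi n z a :=
    fun s => by simp only [Phi, phiP_congr n z (hag s)]
  have hPhiS : ∀ s : ℂ, PhiStar n z (Function.update a n s) = PhiStar n z a :=
    fun s => by simp only [PhiStar, phiP_congr n z (hag s)]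
  have hPsi : ∀ s : ℂ, Psi n z (Function.update a n s) = Psi n z a :=
    fun s => by simp only [Psi, Phi, phiP_congr n z (hag2 s)]
  have hPsiS : ∀ s : ℂ, PsiStar n z (Function.update a n s) = PsiStar n z a :=
    fun s => by simp only [PsiStar, PhiStar, phiP_congr n z (hag2 s)]
  refine ⟨fun s => ?_, fun s => ?_, fun s => ?_, fun s => ?_⟩
  · rw [phiN, hRn s, phi_succ, hPhi s, hPhiS s, Function.update_self]
    ring
  · rw [phiNStar, hRn s, phiStar_succ, hPhi s, hPhiS s, Function.update_self]
    ring
  · rw [psiN, hRn s, psi_succ, hPsi s, hPsiS s, Function.update_self]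
    ring
  · rw [psiNStar, hRn s, psiStar_succ, hPsi s, hPsiS s, Function.update_self]
    ring

lemma d2_all (n : ℕ) (z w : ℂ) (a : ℕ → ℂ) (h : Complex.normSq (a n) < 1) :
    (dAlpha n (phiN (n+1) z) a = starRingEnd ℂ (a n) / 2 * sInvC (a n) ^ 3 *
        (z * phiN n z a - starRingEnd ℂ (a n) * phiNStar n z a) ∧
     dAlphaBar n (phiN (n+1) z) a = a n / 2 * sInvC (a n) ^ 3 *
        (z * phiN n z a - starRingEnd ℂ (a n) * phiNStar n z a) - sInvC (a n) * phiNStar n z a) ∧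
    (dAlpha n (phiNStar (n+1) z) a = starRingEnd ℂ (a n) / 2 * sInvC (a n) ^ 3 *
        (phiNStar n z a - a n * z * phiN n z a) - sInvC (a n) * (z * phiN n z a) ∧
     dAlphaBar n (phiNStar (n+1) z) a = a n / 2 * sInvC (a n) ^ 3 *
        (phiNStar n z a - a n * z * phiN n z a)) ∧
    (dAlpha n (psiN (n+1) w) a = starRingEnd ℂ (a n) / 2 * sInvC (a n) ^ 3 *
        (w * psiN n w a + starRingEnd ℂ (a n) * psiNStar n w a) ∧
     dAlphaBar n (psiN (n+1) w) a = a n / 2 * sInvC (a n) ^ 3 *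
        (w * psiN n w a + starRingEnd ℂ (a n) * psiNStar n w a) + sInvC (a n) * psiNStar n w a) ∧
    (dAlpha n (psiNStar (n+1) w) a = starRingEnd ℂ (a n) / 2 * sInvC (a n) ^ 3 *
        (psiNStar n w a + a n * w * psiN n w a) + sInvC (a n) * (w * psiN n w a) ∧
     dAlphaBar n (psiNStar (n+1) w) a = a n / 2 * sInvC (a n) ^ 3 *
        (psiNStar n w a + a n * w * psiN n w a)) := by
  obtain ⟨r1, r2, r3, r4⟩ := rep_top n z a
  obtain ⟨_, _, r3w, r4w⟩ := rep_top n w a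
  have m1 := master_dAlpha n a h _ _ _ _ _ r1
  have m2 := master_dAlpha n a h _ _ _ _ _ r2
  have m3 := master_dAlpha n a h _ _ _ _ _ r3w
  have m4 := master_dAlpha n a h _ _ _ _ _ r4w
  simp only [phiN, phiNStar, psiN, psiNStar]
  exact ⟨⟨by rw [m1.1]; ring, by rw [m1.2]; ring⟩,
         ⟨by rw [m2.1]; ring, by rw [m2.2]; ring⟩,
         ⟨by rw [m3.1]; ring, by rw [m3.2]; ring⟩,
         ⟨by rw [m4.1]; ring, by rw [m4.2]; ring⟩⟩


lemma term_pair (r α β Xf Bf Cf Xg Bg Cg df dbf dg dbg : ℂ)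
    (hrel : (1 - β * α) * r ^ 2 = 1)
    (h1 : df = β / 2 * r ^ 3 * Xf + r * Bf)
    (h2 : dbf = α / 2 * r ^ 3 * Xf + r * Cf)
    (h3 : dg = β / 2 * r ^ 3 * Xg + r * Bg)
    (h4 : dbg = α / 2 * r ^ 3 * Xg + r * Cg) :
    (1 - β * α) * (dbf * dg - df * dbg)
      = r ^ 2 * (α / 2 * Xf * Bg + β / 2 * Cf * Xg - β / 2 * Xf * Cg - α / 2 * Bf * Xg)
        + (Cf * Bg - Bf * Cg) := by
  subst h1 h2 h3 h4
  linear_combination ((α / 2 * Xf * Bg + β / 2 * Cf * Xg - β / 2 * Xf * Cg - α / 2 * Bf * Xg)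
      * r ^ 2 + (Cf * Bg - Bf * Cg)) * hrel

lemma hrel_of (α : ℂ) (h : Complex.normSq α < 1) :
    (1 - starRingEnd ℂ α * α) * sInvC α ^ 2 = 1 := by
  have hy : (0:ℝ) < 1 - Complex.normSq α := by linarith
  have h1 : (1 - starRingEnd ℂ α * α) = ((1 - Complex.normSq α : ℝ) : ℂ) := by
    rw [Complex.ofReal_sub, Complex.ofReal_one, Complex.normSq_eq_conj_mul_self]
  have h2 : (sInvC α) ^ 2 = ((1 - Complex.normSq α : ℝ) : ℂ)⁻¹ := by
    rw [sInvC, inv_pow, ← Complex.ofReal_pow, Real.sq_sqrt hy.le]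
  rw [h1, h2, mul_inv_cancel₀ (Complex.ofReal_ne_zero.mpr hy.ne')]

lemma key (n : ℕ) (z w : ℂ) (a : ℕ → ℂ) (ha : ∀ k, Complex.normSq (a k) < 1) :
    ((z - w) * (Complex.I * ∑ k ∈ Finset.range n, (1 - (Complex.normSq (a k) : ℂ)) *
        (dAlphaBar k (phiN n z) a * dAlpha k (psiNStar n w) a
          - dAlpha k (phiN n z) a * dAlphaBar k (psiNStar n w) a))
      = (z - w) * (Complex.I / 4) * (phiN n z a * phiNStar n w a
          - 2 * psiN n z a * phiNStar n w a + psiN n z a * psiNStar n w a)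
        + Complex.I * w * (phiNStar n z a * psiN n w a - psiN n z a * phiNStar n w a)) ∧
    ((z - w) * (Complex.I * ∑ k ∈ Finset.range n, (1 - (Complex.normSq (a k) : ℂ)) *
        (dAlphaBar k (phiN n z) a * dAlpha k (psiN n w) a
          - dAlpha k (phiN n z) a * dAlphaBar k (psiN n w) a))
      = (z - w) * (Complex.I / 4) * (-(phiN n z a * phiN n w a)
          - 2 * phiN n z a * psiN n w a + 2 * psiN n z a * phiN n w a + psiN n z a * psiN n w a)
        + Complex.I * w * (psiN n z a * phiN n w a - phiN n z a * psiN n w a)) ∧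
    ((z - w) * (Complex.I * ∑ k ∈ Finset.range n, (1 - (Complex.normSq (a k) : ℂ)) *
        (dAlphaBar k (phiNStar n z) a * dAlpha k (psiNStar n w) a
          - dAlpha k (phiNStar n z) a * dAlphaBar k (psiNStar n w) a))
      = (z - w) * (Complex.I / 4) * (phiNStar n z a * phiNStar n w a
          - 2 * phiNStar n z a * psiNStar n w a + 2 * psiNStar n z a * phiNStar n w a
          - psiNStar n z a * psiNStar n w a)
        + Complex.I * w * (psiNStar n z a * phiNStar n w a - phiNStar n z a * psiNStar n w a)) ∧
    ((z - w) * (Complex.I * ∑ k ∈ Finset.range n, (1 - (Complex.normSq (a k) : ℂ)) *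
        (dAlphaBar k (phiNStar n z) a * dAlpha k (psiN n w) a
          - dAlpha k (phiNStar n z) a * dAlphaBar k (psiN n w) a))
      = (z - w) * (Complex.I / 4) * (4 * phiN n z a * psiNStar n w a
          - phiNStar n z a * phiN n w a - 2 * psiNStar n z a * phiN n w a
          - psiNStar n z a * psiN n w a)
        + Complex.I * w * (phiN n z a * psiNStar n w a - psiNStar n z a * phiN n w a)) := by
  induction n with
  | zero =>
    refine ⟨?_, ?_, ?_, ?_⟩ <;>
      · simp only [Finset.range_zero, Finset.sum_empty, mul_zero, phiN, phiNStar, psiN,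
          psiNStar, Phi, PhiStar, Psi, PsiStar, PhiP, Rn, Finset.prod_empty]
        ring
  | succ n ih =>
    obtain ⟨ih1, ih2, ih3, ih4⟩ := ih
    have hrel : (1 - starRingEnd ℂ (a n) * a n) * sInvC (a n) ^ 2 = 1 := hrel_of _ (ha n)
    have hns : ((Complex.normSq (a n) : ℝ) : ℂ) = starRingEnd ℂ (a n) * a n :=
      Complex.normSq_eq_conj_mul_self
    obtain ⟨⟨dp1, dp2⟩, ⟨dq1, dq2⟩, ⟨dr1, dr2⟩, ⟨ds1, ds2⟩⟩ := d2_all n z w a (ha n)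
    -- abbreviations for term_pair instantiations
    have htop1 := term_pair (sInvC (a n)) (a n) (starRingEnd ℂ (a n))
      (z * phiN n z a - starRingEnd ℂ (a n) * phiNStar n z a) 0 (-(phiNStar n z a))
      (psiNStar n w a + a n * w * psiN n w a) (w * psiN n w a) 0
      (dAlpha n (phiN (n+1) z) a) (dAlphaBar n (phiN (n+1) z) a)
      (dAlpha n (psiNStar (n+1) w) a) (dAlphaBar n (psiNStar (n+1) w) a)
      hrel (by rw [dp1]; try ring) (by rw [dp2]; try ring) (by rw [ds1]; try ring) (by rw [ds2]; try ring)
    have htop2 := term_pair (sInvC (a n)) (a n) (starRingEnd ℂ (a n))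
      (z * phiN n z a - starRingEnd ℂ (a n) * phiNStar n z a) 0 (-(phiNStar n z a))
      (w * psiN n w a + starRingEnd ℂ (a n) * psiNStar n w a) 0 (psiNStar n w a)
      (dAlpha n (phiN (n+1) z) a) (dAlphaBar n (phiN (n+1) z) a)
      (dAlpha n (psiN (n+1) w) a) (dAlphaBar n (psiN (n+1) w) a)
      hrel (by rw [dp1]; try ring) (by rw [dp2]; try ring) (by rw [dr1]; try ring) (by rw [dr2]; try ring)
    have htop3 := term_pair (sInvC (a n)) (a n) (starRingEnd ℂ (a n))
      (phiNStar n z a - a n * z * phiN n z a) (-(z * phiN n z a)) 0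
      (psiNStar n w a + a n * w * psiN n w a) (w * psiN n w a) 0
      (dAlpha n (phiNStar (n+1) z) a) (dAlphaBar n (phiNStar (n+1) z) a)
      (dAlpha n (psiNStar (n+1) w) a) (dAlphaBar n (psiNStar (n+1) w) a)
      hrel (by rw [dq1]; try ring) (by rw [dq2]; try ring) (by rw [ds1]; try ring) (by rw [ds2]; try ring)
    have htop4 := term_pair (sInvC (a n)) (a n) (starRingEnd ℂ (a n))
      (phiNStar n z a - a n * z * phiN n z a) (-(z * phiN n z a)) 0
      (w * psiN n w a + starRingEnd ℂ (a n) * psiNStar n w a) 0 (psiNStar n w a)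
      (dAlpha n (phiNStar (n+1) z) a) (dAlphaBar n (phiNStar (n+1) z) a)
      (dAlpha n (psiN (n+1) w) a) (dAlphaBar n (psiN (n+1) w) a)
      hrel (by rw [dq1]; try ring) (by rw [dq2]; try ring) (by rw [dr1]; try ring) (by rw [dr2]; try ring)
    refine ⟨?_, ?_, ?_, ?_⟩
    · -- conjunct 1 : (phi, psiStar)
      have hsum : ∀ k ∈ Finset.range n,
          (1 - (Complex.normSq (a k) : ℂ)) *
            (dAlphaBar k (phiN (n+1) z) a * dAlpha k (psiNStar (n+1) w) a
              - dAlpha k (phiN (n+1) z) a * dAlphaBar k (psiNStar (n+1) w) a)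
          = (sInvC (a n) ^ 2 * z) * ((1 - (Complex.normSq (a k) : ℂ)) *
              (dAlphaBar k (phiN n z) a * dAlpha k (psiNStar n w) a
                - dAlpha k (phiN n z) a * dAlphaBar k (psiNStar n w) a))
            + (sInvC (a n) ^ 2 * z * (a n) * w) * ((1 - (Complex.normSq (a k) : ℂ)) *
              (dAlphaBar k (phiN n z) a * dAlpha k (psiN n w) a
                - dAlpha k (phiN n z) a * dAlphaBar k (psiN n w) a))
            + (-(sInvC (a n) ^ 2 * starRingEnd ℂ (a n))) * ((1 - (Complex.normSq (a k) : ℂ)) *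
              (dAlphaBar k (phiNStar n z) a * dAlpha k (psiNStar n w) a
                - dAlpha k (phiNStar n z) a * dAlphaBar k (psiNStar n w) a))
            + (-(sInvC (a n) ^ 2 * starRingEnd ℂ (a n) * (a n) * w)) *
              ((1 - (Complex.normSq (a k) : ℂ)) *
              (dAlphaBar k (phiNStar n z) a * dAlpha k (psiN n w) a
                - dAlpha k (phiNStar n z) a * dAlphaBar k (psiN n w) a)) := by
        intro k hk
        obtain ⟨⟨e1, e2⟩, ⟨e3, e4⟩, ⟨e5, e6⟩, ⟨e7, e8⟩⟩ :=
          d1_all n k (Finset.mem_range.mp hk) z w a (ha k)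
        rw [e1, e2, e7, e8]
        ring
      rw [Finset.sum_range_succ, Finset.sum_congr rfl hsum, Finset.sum_add_distrib,
        Finset.sum_add_distrib, Finset.sum_add_distrib, ← Finset.mul_sum, ← Finset.mul_sum,
        ← Finset.mul_sum, ← Finset.mul_sum, hns, htop1]
      simp only [phiN_succ, phiNStar_succ, psiN_succ, psiNStar_succ]
      linear_combination (sInvC (a n) ^ 2 * z) * ih1
        + (sInvC (a n) ^ 2 * z * (a n) * w) * ih2
        + (-(sInvC (a n) ^ 2 * starRingEnd ℂ (a n))) * ih3
        + (-(sInvC (a n) ^ 2 * starRingEnd ℂ (a n) * (a n) * w)) * ih4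
        + ((z - w) * Complex.I * phiNStar n z a * w * psiN n w a) * hrel
    · have hsum : ∀ k ∈ Finset.range n,
          (1 - (Complex.normSq (a k) : ℂ)) *
            (dAlphaBar k (phiN (n+1) z) a * dAlpha k (psiN (n+1) w) a
              - dAlpha k (phiN (n+1) z) a * dAlphaBar k (psiN (n+1) w) a)
          = (sInvC (a n) ^ 2 * z * (starRingEnd ℂ (a n))) * ((1 - (Complex.normSq (a k) : ℂ)) *
              (dAlphaBar k (phiN n z) a * dAlpha k (psiNStar n w) a
                - dAlpha k (phiN n z) a * dAlphaBar k (psiNStar n w) a)) + (sInvC (a n) ^ 2 * z * w) * ((1 - (Complex.normSq (a k) : ℂ)) *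
              (dAlphaBar k (phiN n z) a * dAlpha k (psiN n w) a
                - dAlpha k (phiN n z) a * dAlphaBar k (psiN n w) a)) + (-(sInvC (a n) ^ 2 * (starRingEnd ℂ (a n)) * (starRingEnd ℂ (a n)))) * ((1 - (Complex.normSq (a k) : ℂ)) *
              (dAlphaBar k (phiNStar n z) a * dAlpha k (psiNStar n w) a
                - dAlpha k (phiNStar n z) a * dAlphaBar k (psiNStar n w) a)) + (-(sInvC (a n) ^ 2 * (starRingEnd ℂ (a n)) * w)) * ((1 - (Complex.normSq (a k) : ℂ)) *
              (dAlphaBar k (phiNStar n z) a * dAlpha k (psiN n w) a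
                - dAlpha k (phiNStar n z) a * dAlphaBar k (psiN n w) a)) := by
        intro k hk
        obtain ⟨⟨e1, e2⟩, ⟨e3, e4⟩, ⟨e5, e6⟩, ⟨e7, e8⟩⟩ :=
          d1_all n k (Finset.mem_range.mp hk) z w a (ha k)
        rw [e1, e2, e5, e6]
        ring
      rw [Finset.sum_range_succ, Finset.sum_congr rfl hsum, Finset.sum_add_distrib,
        Finset.sum_add_distrib, Finset.sum_add_distrib, ← Finset.mul_sum, ← Finset.mul_sum,
        ← Finset.mul_sum, ← Finset.mul_sum, hns, htop2]
      simp only [phiN_succ, phiNStar_succ, psiN_succ, psiNStar_succ]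
      linear_combination (sInvC (a n) ^ 2 * z * (starRingEnd ℂ (a n))) * ih1 + (sInvC (a n) ^ 2 * z * w) * ih2 + (-(sInvC (a n) ^ 2 * (starRingEnd ℂ (a n)) * (starRingEnd ℂ (a n)))) * ih3 + (-(sInvC (a n) ^ 2 * (starRingEnd ℂ (a n)) * w)) * ih4
    · have hsum : ∀ k ∈ Finset.range n,
          (1 - (Complex.normSq (a k) : ℂ)) *
            (dAlphaBar k (phiNStar (n+1) z) a * dAlpha k (psiNStar (n+1) w) a
              - dAlpha k (phiNStar (n+1) z) a * dAlphaBar k (psiNStar (n+1) w) a)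
          = (-(sInvC (a n) ^ 2 * (a n) * z)) * ((1 - (Complex.normSq (a k) : ℂ)) *
              (dAlphaBar k (phiN n z) a * dAlpha k (psiNStar n w) a
                - dAlpha k (phiN n z) a * dAlphaBar k (psiNStar n w) a)) + (-(sInvC (a n) ^ 2 * (a n) * z * (a n) * w)) * ((1 - (Complex.normSq (a k) : ℂ)) *
              (dAlphaBar k (phiN n z) a * dAlpha k (psiN n w) a
                - dAlpha k (phiN n z) a * dAlphaBar k (psiN n w) a)) + (sInvC (a n) ^ 2) * ((1 - (Complex.normSq (a k) : ℂ)) *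
              (dAlphaBar k (phiNStar n z) a * dAlpha k (psiNStar n w) a
                - dAlpha k (phiNStar n z) a * dAlphaBar k (psiNStar n w) a)) + (sInvC (a n) ^ 2 * (a n) * w) * ((1 - (Complex.normSq (a k) : ℂ)) *
              (dAlphaBar k (phiNStar n z) a * dAlpha k (psiN n w) a
                - dAlpha k (phiNStar n z) a * dAlphaBar k (psiN n w) a)) := by
        intro k hk
        obtain ⟨⟨e1, e2⟩, ⟨e3, e4⟩, ⟨e5, e6⟩, ⟨e7, e8⟩⟩ :=
          d1_all n k (Finset.mem_range.mp hk) z w a (ha k)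
        rw [e3, e4, e7, e8]
        ring
      rw [Finset.sum_range_succ, Finset.sum_congr rfl hsum, Finset.sum_add_distrib,
        Finset.sum_add_distrib, Finset.sum_add_distrib, ← Finset.mul_sum, ← Finset.mul_sum,
        ← Finset.mul_sum, ← Finset.mul_sum, hns, htop3]
      simp only [phiN_succ, phiNStar_succ, psiN_succ, psiNStar_succ]
      linear_combination (-(sInvC (a n) ^ 2 * (a n) * z)) * ih1 + (-(sInvC (a n) ^ 2 * (a n) * z * (a n) * w)) * ih2 + (sInvC (a n) ^ 2) * ih3 + (sInvC (a n) ^ 2 * (a n) * w) * ih4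
    · have hsum : ∀ k ∈ Finset.range n,
          (1 - (Complex.normSq (a k) : ℂ)) *
            (dAlphaBar k (phiNStar (n+1) z) a * dAlpha k (psiN (n+1) w) a
              - dAlpha k (phiNStar (n+1) z) a * dAlphaBar k (psiN (n+1) w) a)
          = (-(sInvC (a n) ^ 2 * (a n) * z * (starRingEnd ℂ (a n)))) * ((1 - (Complex.normSq (a k) : ℂ)) *
              (dAlphaBar k (phiN n z) a * dAlpha k (psiNStar n w) a
                - dAlpha k (phiN n z) a * dAlphaBar k (psiNStar n w) a)) + (-(sInvC (a n) ^ 2 * (a n) * z * w)) * ((1 - (Complex.normSq (a k) : ℂ)) *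
              (dAlphaBar k (phiN n z) a * dAlpha k (psiN n w) a
                - dAlpha k (phiN n z) a * dAlphaBar k (psiN n w) a)) + (sInvC (a n) ^ 2 * (starRingEnd ℂ (a n))) * ((1 - (Complex.normSq (a k) : ℂ)) *
              (dAlphaBar k (phiNStar n z) a * dAlpha k (psiNStar n w) a
                - dAlpha k (phiNStar n z) a * dAlphaBar k (psiNStar n w) a)) + (sInvC (a n) ^ 2 * w) * ((1 - (Complex.normSq (a k) : ℂ)) *
              (dAlphaBar k (phiNStar n z) a * dAlpha k (psiN n w) a
                - dAlpha k (phiNStar n z) a * dAlphaBar k (psiN n w) a)) := by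
        intro k hk
        obtain ⟨⟨e1, e2⟩, ⟨e3, e4⟩, ⟨e5, e6⟩, ⟨e7, e8⟩⟩ :=
          d1_all n k (Finset.mem_range.mp hk) z w a (ha k)
        rw [e3, e4, e5, e6]
        ring
      rw [Finset.sum_range_succ, Finset.sum_congr rfl hsum, Finset.sum_add_distrib,
        Finset.sum_add_distrib, Finset.sum_add_distrib, ← Finset.mul_sum, ← Finset.mul_sum,
        ← Finset.mul_sum, ← Finset.mul_sum, hns, htop4]
      simp only [phiN_succ, phiNStar_succ, psiN_succ, psiNStar_succ]
      linear_combination (-(sInvC (a n) ^ 2 * (a n) * z * (starRingEnd ℂ (a n)))) * ih1 + (-(sInvC (a n) ^ 2 * (a n) * z * w)) * ih2 + (sInvC (a n) ^ 2 * (starRingEnd ℂ (a n))) * ih3 + (sInvC (a n) ^ 2 * w) * ih4 + (-((z - w) * Complex.I * z * phiN n z a * psiNStar n w a)) * hrel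

theorem poisson_phi_psiStar (n : ℕ) (z w : ℂ) (hzw : z ≠ w) (a : ℕ → ℂ) (ha : ∀ k, ‖a k‖ < 1) :
    pb (phiN n z) (psiNStar n w) a =
      Complex.I / 4 * ((phiN n z a - psiN n z a) * phiNStar n w a
        - psiN n z a * (phiNStar n w a - psiNStar n w a))
      - Complex.I * w / (z - w) * (psiN n z a * phiNStar n w a - psiN n w a * phiNStar n z a) := by
  have ha' : ∀ k, Complex.normSq (a k) < 1 := by
    intro k
    have h1 := ha k
    have h2 := norm_nonneg (a k)
    rw [← Complex.sq_norm]
    nlinarith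
  have hsupp : ∀ k ∉ Finset.range n, (1 - (Complex.normSq (a k) : ℂ)) *
      (dAlphaBar k (phiN n z) a * dAlpha k (psiNStar n w) a
        - dAlpha k (phiN n z) a * dAlphaBar k (psiNStar n w) a) = 0 := by
    intro k hk
    have hn : n ≤ k := Nat.le_of_not_lt (fun h => hk (Finset.mem_range.mpr h))
    obtain ⟨⟨v1, v2⟩, -, -, -⟩ := vanish_four n k hn z a
    obtain ⟨-, -, -, ⟨v7, v8⟩⟩ := vanish_four n k hn w a
    rw [v1, v2, v7, v8]
    ring
  have hkey := (key n z w a ha').1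
  rw [pb, tsum_eq_sum hsupp]
  have hzw' : z - w ≠ 0 := sub_ne_zero.mpr hzw
  apply mul_left_cancel₀ hzw'
  rw [hkey]
  field_simp
  ring
end
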